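/- arXiv:1708.06400 — 7 statements merged into one kernel-verified Lean document; each statement's English description precedes it below -/
import Mathlib

section
/- Assume sup_{u∈S} f(u) < ∞ and μ(S) > 0, and set η = μ(S)·sup_{u∈S} f(u), where μ is Lebesgue measure. Then for every integer n ≥ 1, the optimal average per-user rate satisfies R_n ≤ (η r/d)·log n + η·log(1 + P/μ(S)^{r/d}) + 2ηr. -/
/-! Let `D u` be the distance from the user `u` to the nearest antenna. Every path-loss term is
at most `D u ^ (-r)`, so the integrand is at most `(sup f) * log (1 + P * D u ^ (-r))`, and for
every radius `ρ > 0`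
  `log (1 + P * D ^ (-r)) ≤ log (1 + P * ρ ^ (-r)) + r * log⁺ (ρ / D)`.
The first term integrates over `S` to `μ(S) * log (1 + P * ρ ^ (-r))`. For the second, the
layer-cake formula reduces to the volumes of `{D < ρ e^{-t}}`, which are covered by `n` balls
whose volume is at most `(2 ρ e^{-t})^d` each, so `∫ log⁺ (ρ / D) ≤ n (2ρ)^d / d`. Choosing
`n (2ρ)^d = μ(S)` gives the bound. -/

open MeasureTheory Real
open scoped ENNReal BigOperators

/-- The average per-user rate of a deployment `X` of `n` antenna locations,
with power `P`, path-loss exponent `r`, cell `S`, and user density `f`. -/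
noncomputable def avgRate (d n : ℕ) (P r : ℝ) (S : Set (EuclideanSpace ℝ (Fin d)))
    (f : EuclideanSpace ℝ (Fin d) → ℝ) (X : Fin n → EuclideanSpace ℝ (Fin d)) : ℝ≥0∞ :=
  ∫⁻ u in S, ENNReal.ofReal (Real.log (1 + (P / n) * ∑ i, ‖u - X i‖ ^ (-r)) * f u)

/-- The optimal average per-user rate `R_n`, the supremum over all deployments. -/
noncomputable def optRate (d n : ℕ) (P r : ℝ) (S : Set (EuclideanSpace ℝ (Fin d)))
    (f : EuclideanSpace ℝ (Fin d) → ℝ) : ℝ≥0∞ :=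
  ⨆ X : Fin n → EuclideanSpace ℝ (Fin d), avgRate d n P r S f X

open Set Metric

theorem Real.log_one_add_mul_le {k x : ℝ} (hk : 1 ≤ k) (hx : 0 ≤ x) :
    log (1 + k * x) ≤ log k + log (1 + x) := by
  rw [← log_mul (by positivity) (by positivity)]
  exact log_le_log (by positivity) (by nlinarith)

theorem Real.log_one_add_mul_rpow_neg_le {P a ρ r : ℝ} (hP : 0 ≤ P) (ha : 0 < a) (hρ : 0 < ρ)
    (hr : 0 ≤ r) : log (1 + P * a ^ (-r)) ≤ log (1 + P * ρ ^ (-r)) + r * log⁺ (ρ / a) := by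
  rcases le_total ρ a with hρa | haρ
  · calc log (1 + P * a ^ (-r)) ≤ log (1 + P * ρ ^ (-r)) :=
          log_le_log (by positivity) (add_le_add_right (mul_le_mul_of_nonneg_left
            (rpow_le_rpow_of_nonpos hρ hρa (neg_nonpos.2 hr)) hP) 1)
      _ ≤ _ := le_add_of_nonneg_right (mul_nonneg hr posLog_nonneg)
  · have hratio : 1 ≤ ρ / a := (one_le_div ha).2 haρ
    have hsplit : P * a ^ (-r) = (ρ / a) ^ r * (P * ρ ^ (-r)) := by
      rw [div_rpow hρ.le ha.le, rpow_neg hρ.le, rpow_neg ha.le]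
      field_simp
    calc log (1 + P * a ^ (-r)) ≤ log ((ρ / a) ^ r) + log (1 + P * ρ ^ (-r)) := by
          rw [hsplit]
          exact log_one_add_mul_le (one_le_rpow hratio hr) (by positivity)
      _ = _ := by
          rw [log_rpow (by positivity), posLog_eq_log (by rwa [abs_of_pos (by positivity)])]
          ring

theorem EuclideanSpace.isBounded_setOf_forall_mem_Icc {ι : Type*} [Fintype ι] (a b : ι → ℝ) :
    Bornology.IsBounded {u : EuclideanSpace ℝ ι | ∀ i, u i ∈ Icc (a i) (b i)} :=
  ((PiLp.antilipschitzWith_ofLp 2 _).isBounded_preimage (Metric.isBounded_Icc a b)).subset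
    fun _ hu => ⟨fun i => (hu i).1, fun i => (hu i).2⟩

theorem EuclideanSpace.volume_ball_le {ι : Type*} [Fintype ι] (x : EuclideanSpace ℝ ι) {δ : ℝ}
    (hδ : 0 < δ) : volume (ball x δ) ≤ ENNReal.ofReal ((2 * δ) ^ Fintype.card ι) := by
  rw [← (PiLp.volume_preserving_toLp ι).measure_preimage measurableSet_ball.nullMeasurableSet,
    ← Real.volume_pi_ball (WithLp.ofLp x) hδ]
  refine measure_mono fun v hv => ?_
  simpa using (PiLp.lipschitzWith_ofLp 2 _).mapsTo_ball one_ne_zero x δ hv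

theorem EuclideanSpace.volume_thickening_range_le {ι κ : Type*} [Fintype ι] [Fintype κ]
    (X : κ → EuclideanSpace ℝ ι) {δ : ℝ} (hδ : 0 < δ) :
    volume (thickening δ (range X)) ≤
      ENNReal.ofReal (Fintype.card κ * (2 * δ) ^ Fintype.card ι) := by
  rw [thickening_eq_biUnion_ball, biUnion_range, ENNReal.ofReal_mul (by positivity),
    ENNReal.ofReal_natCast]
  calc volume (⋃ i, ball (X i) δ) ≤ ∑ i, volume (ball (X i) δ) := measure_iUnion_fintype_le _ _
    _ ≤ ∑ _i : κ, ENNReal.ofReal ((2 * δ) ^ Fintype.card ι) :=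
        Finset.sum_le_sum fun i _ => volume_ball_le (X i) hδ
    _ = _ := by simp

theorem lintegral_exp_neg_mul_Ioi {b : ℝ} (hb : 0 < b) {K : ℝ} (hK : 0 ≤ K) :
    ∫⁻ t in Ioi 0, ENNReal.ofReal (K * exp (-b * t)) = ENNReal.ofReal (K / b) := by
  rw [← ofReal_integral_eq_lintegral_ofReal
    ((integrableOn_exp_mul_Ioi (neg_neg_of_pos hb) 0).const_mul K)
    (Filter.Eventually.of_forall fun t => by positivity),
    integral_const_mul, integral_exp_mul_Ioi (neg_neg_of_pos hb)]
  congr 1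
  simp [div_eq_mul_inv]

theorem mem_thickening_of_lt_posLog_div_infDist {α : Type*} [PseudoMetricSpace α] {s : Set α}
    {x : α} {ρ t : ℝ} (hρ : 0 ≤ ρ) (ht : 0 < t) (hlt : t < log⁺ (ρ / infDist x s)) :
    x ∈ thickening (ρ * exp (-t)) s := by
  have hlog : t < log (ρ / infDist x s) := by
    simpa [posLog, ht.not_gt] using hlt
  have hone : 1 < ρ / infDist x s :=
    (log_pos_iff (div_nonneg hρ infDist_nonneg)).1 (ht.trans hlog)
  have hpos : 0 < infDist x s := by
    refine infDist_nonneg.lt_of_ne fun h => ?_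
    rw [← h, div_zero] at hone
    exact one_pos.not_gt hone
  have hne : s.Nonempty := by
    by_contra hs
    rw [not_nonempty_iff_eq_empty.1 hs, infDist_empty] at hpos
    exact hpos.false
  have hexp : exp t < ρ / infDist x s := (lt_log_iff_exp_lt (one_pos.trans hone)).1 hlog
  rw [mem_thickening_iff_infDist_lt hne, exp_neg, ← div_eq_mul_inv]
  rwa [lt_div_iff₀ (exp_pos t), mul_comm, ← lt_div_iff₀ hpos]

theorem EuclideanSpace.lintegral_posLog_div_infDist_le {ι κ : Type*} [Fintype ι] [Nonempty ι]
    [Fintype κ] (X : κ → EuclideanSpace ℝ ι) {ρ : ℝ} (hρ : 0 < ρ) :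
    ∫⁻ u, ENNReal.ofReal (log⁺ (ρ / infDist u (range X))) ≤
      ENNReal.ofReal (Fintype.card κ * (2 * ρ) ^ Fintype.card ι / Fintype.card ι) := by
  have hmeas : Measurable fun u => log⁺ (ρ / infDist u (range X)) := by fun_prop
  rw [lintegral_eq_lintegral_meas_lt _ (Filter.Eventually.of_forall fun u => posLog_nonneg)
    hmeas.aemeasurable, ←
    lintegral_exp_neg_mul_Ioi (by positivity : (0 : ℝ) < Fintype.card ι) (by positivity)]
  refine setLIntegral_mono (by fun_prop) fun t ht => ?_
  calc volume {u | t < log⁺ (ρ / infDist u (range X))}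
      ≤ volume (thickening (ρ * exp (-t)) (range X)) :=
        measure_mono fun u hu => mem_thickening_of_lt_posLog_div_infDist hρ.le ht hu
    _ ≤ _ := volume_thickening_range_le X (by positivity)
    _ = _ := by
        congr 1
        rw [mul_pow, mul_pow, ← exp_nat_mul]
        ring_nf

theorem sum_norm_sub_rpow_neg_le_card_mul {E κ : Type*} [SeminormedAddCommGroup E] [Fintype κ]
    (X : κ → E) {u : E} {r : ℝ} (hr : 0 ≤ r) (hu : 0 < infDist u (range X)) :
    ∑ i, ‖u - X i‖ ^ (-r) ≤ Fintype.card κ * infDist u (range X) ^ (-r) := by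
  calc ∑ i, ‖u - X i‖ ^ (-r) ≤ ∑ _i : κ, infDist u (range X) ^ (-r) :=
        Finset.sum_le_sum fun i _ => rpow_le_rpow_of_nonpos hu
          (dist_eq_norm u (X i) ▸ infDist_le_dist_of_mem (mem_range_self i)) (neg_nonpos.2 hr)
    _ = _ := by simp

theorem log_one_add_div_mul_sum_rpow_neg_le {E : Type*} [SeminormedAddCommGroup E] {n : ℕ}
    (X : Fin n → E) {u : E} {P r ρ : ℝ} (hP : 0 ≤ P) (hr : 0 ≤ r) (hρ : 0 < ρ)
    (hu : 0 < infDist u (range X)) :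
    log (1 + P / n * ∑ i, ‖u - X i‖ ^ (-r)) ≤
      log (1 + P * ρ ^ (-r)) + r * log⁺ (ρ / infDist u (range X)) := by
  have hn : (n : ℝ) ≠ 0 := Nat.cast_ne_zero.2 fun h => by subst h; simp at hu
  calc log (1 + P / n * ∑ i, ‖u - X i‖ ^ (-r)) ≤ log (1 + P * infDist u (range X) ^ (-r)) := by
        refine log_le_log (by positivity) ?_
        calc 1 + P / n * ∑ i, ‖u - X i‖ ^ (-r)
            ≤ 1 + P / n * (n * infDist u (range X) ^ (-r)) := by
              gcongr
              simpa using sum_norm_sub_rpow_neg_le_card_mul X hr hu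
          _ = _ := by field_simp
    _ ≤ _ := log_one_add_mul_rpow_neg_le hP hu hρ hr

theorem avgRate_le {d n : ℕ} (hd : d ≠ 0) (hn : n ≠ 0) {P r ρ F : ℝ} (hP : 0 ≤ P) (hr : 0 ≤ r)
    (hρ : 0 < ρ) {S : Set (EuclideanSpace ℝ (Fin d))} (hS : MeasurableSet S)
    {f : EuclideanSpace ℝ (Fin d) → ℝ} (hfF : ∀ u ∈ S, f u ≤ F)
    (X : Fin n → EuclideanSpace ℝ (Fin d)) :
    avgRate d n P r S f X ≤ ENNReal.ofReal F *
      (volume S * ENNReal.ofReal (log (1 + P * ρ ^ (-r))) +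
        ENNReal.ofReal (r * (n * (2 * ρ) ^ d / d))) := by
  have : Nonempty (Fin d) := Fin.pos_iff_nonempty.1 (Nat.pos_of_ne_zero hd)
  have : Nonempty (Fin n) := Fin.pos_iff_nonempty.1 (Nat.pos_of_ne_zero hn)
  set T := log (1 + P * ρ ^ (-r))
  set g := fun u => r * log⁺ (ρ / infDist u (range X))
  have hT : 0 ≤ T := log_nonneg (le_add_of_nonneg_right (by positivity))
  have hoff : ∀ᵐ u ∂volume, 0 < infDist u (range X) := by
    filter_upwards [measure_eq_zero_iff_ae_notMem.1 ((finite_range X).measure_zero volume)]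
      with u hu
    rwa [← infDist_pos_iff_notMem_closure (range_nonempty X), (finite_range X).isClosed.closure_eq]
  have hpt : ∀ᵐ u ∂volume.restrict S,
      ENNReal.ofReal (log (1 + P / n * ∑ i, ‖u - X i‖ ^ (-r)) * f u) ≤
        ENNReal.ofReal F * (ENNReal.ofReal T + ENNReal.ofReal (g u)) := by
    filter_upwards [ae_restrict_mem hS, ae_restrict_of_ae hoff] with u huS hu
    rw [ENNReal.ofReal_mul (log_nonneg (le_add_of_nonneg_right (by positivity))), mul_comm,
      ← ENNReal.ofReal_add hT (mul_nonneg hr posLog_nonneg)]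
    exact mul_le_mul' (ENNReal.ofReal_le_ofReal (hfF u huS))
      (ENNReal.ofReal_le_ofReal (log_one_add_div_mul_sum_rpow_neg_le X hP hr hρ hu))
  have hg : ∫⁻ u in S, ENNReal.ofReal (g u) ≤ ENNReal.ofReal (r * (n * (2 * ρ) ^ d / d)) :=
    calc ∫⁻ u in S, ENNReal.ofReal (g u)
        ≤ ∫⁻ u, ENNReal.ofReal (g u) := setLIntegral_le_lintegral _ _
      _ = ENNReal.ofReal r * ∫⁻ u, ENNReal.ofReal (log⁺ (ρ / infDist u (range X))) := by
          simp only [g, ENNReal.ofReal_mul hr]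
          exact lintegral_const_mul' _ _ ENNReal.ofReal_ne_top
      _ ≤ ENNReal.ofReal r * ENNReal.ofReal (n * (2 * ρ) ^ d / d) := by
          gcongr
          simpa using EuclideanSpace.lintegral_posLog_div_infDist_le X hρ
      _ = _ := (ENNReal.ofReal_mul hr).symm
  calc avgRate d n P r S f X
      ≤ ∫⁻ u in S, ENNReal.ofReal F * (ENNReal.ofReal T + ENNReal.ofReal (g u)) :=
        lintegral_mono_ae hpt
    _ = ENNReal.ofReal F * (volume S * ENNReal.ofReal T + ∫⁻ u in S, ENNReal.ofReal (g u)) := by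
        rw [lintegral_const_mul' _ _ ENNReal.ofReal_ne_top, lintegral_add_left measurable_const,
          setLIntegral_const, mul_comm (ENNReal.ofReal T)]
    _ ≤ _ := by gcongr

theorem optRate_le {d n : ℕ} (hd : d ≠ 0) (hn : n ≠ 0) {P r ρ F : ℝ} (hP : 0 ≤ P) (hr : 0 ≤ r)
    (hρ : 0 < ρ) {S : Set (EuclideanSpace ℝ (Fin d))} (hS : MeasurableSet S)
    {f : EuclideanSpace ℝ (Fin d) → ℝ} (hfF : ∀ u ∈ S, f u ≤ F) :
    optRate d n P r S f ≤ ENNReal.ofReal F *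
      (volume S * ENNReal.ofReal (log (1 + P * ρ ^ (-r))) +
        ENNReal.ofReal (r * (n * (2 * ρ) ^ d / d))) :=
  iSup_le fun X => avgRate_le hd hn hP hr hρ hS hfF X

theorem optRate_le_of_volume_eq {d n : ℕ} (hd : d ≠ 0) (hn : n ≠ 0) {P r V F : ℝ} (hP : 0 ≤ P)
    (hr : 0 ≤ r) {S : Set (EuclideanSpace ℝ (Fin d))} (hS : MeasurableSet S)
    {f : EuclideanSpace ℝ (Fin d) → ℝ} (hfF : ∀ u ∈ S, f u ≤ F)
    (hV : volume S = ENNReal.ofReal V) (hVpos : 0 < V) (hF : 0 ≤ F) :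
    optRate d n P r S f ≤
      ENNReal.ofReal (V * F * (log (1 + (2 ^ d * n) ^ (r / d) * (P / V ^ (r / d))) + r / d)) := by
  set ρ : ℝ := (V / (2 ^ d * n)) ^ ((d : ℝ)⁻¹)
  have hρ : 0 < ρ := by positivity
  have hvol : n * (2 * ρ) ^ d / d = V / d := by
    rw [mul_pow, rpow_inv_natCast_pow (by positivity) hd]
    field_simp
  have hgain : P * ρ ^ (-r) = (2 ^ d * n) ^ (r / d) * (P / V ^ (r / d)) := by
    rw [← rpow_mul (by positivity), show (d : ℝ)⁻¹ * -r = -(r / d) by ring,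
      rpow_neg (by positivity), div_rpow (by positivity) (by positivity)]
    field_simp
  refine (optRate_le hd hn hP hr hρ hS hfF).trans_eq ?_
  rw [hvol, hgain, hV, ← ENNReal.ofReal_mul hVpos.le,
    ← ENNReal.ofReal_add (mul_nonneg hVpos.le (log_nonneg (le_add_of_nonneg_right (by positivity))))
      (by positivity), ← ENNReal.ofReal_mul hF]
  congr 1
  ring

theorem log_one_add_rpow_mul_add_le {d n : ℕ} (hd : d ≠ 0) (hn : n ≠ 0) {r x : ℝ} (hr : 0 ≤ r)
    (hx : 0 ≤ x) :
    log (1 + (2 ^ d * n) ^ (r / d) * x) + r / d ≤ r / d * log n + log (1 + x) + 2 * r := by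
  have hn1 : (1 : ℝ) ≤ n := by exact_mod_cast Nat.one_le_iff_ne_zero.2 hn
  have hn0 : (0 : ℝ) < n := one_pos.trans_le hn1
  have hk : 1 ≤ ((2 : ℝ) ^ d * n) ^ (r / d) :=
    one_le_rpow (one_le_mul_of_one_le_of_one_le (one_le_pow₀ one_le_two) hn1) (by positivity)
  have hlogk : log (((2 : ℝ) ^ d * n) ^ (r / d)) = r * log 2 + r / d * log n := by
    rw [log_rpow (by positivity), log_mul (by positivity) hn0.ne', log_pow]
    field_simp
  have hlog2 : log 2 ≤ 1 := by linarith [log_two_lt_d9]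
  have hrd : r / d ≤ r := div_le_self hr (by exact_mod_cast Nat.one_le_iff_ne_zero.2 hd)
  nlinarith [log_one_add_mul_le hk hx, mul_le_mul_of_nonneg_left hlog2 hr]

theorem rate_upper_bound_general (d : ℕ) (hd : 1 ≤ d) (M P r : ℝ) (hP : 0 < P)
    (hr : 0 ≤ r) (S : Set (EuclideanSpace ℝ (Fin d))) (hSmeas : MeasurableSet S)
    (hSsub : S ⊆ {u : EuclideanSpace ℝ (Fin d) | ∀ i, u i ∈ Set.Icc (0 : ℝ) M})
    (f : EuclideanSpace ℝ (Fin d) → ℝ) (hf0 : ∀ u, 0 ≤ f u)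
    (hfbdd : BddAbove (f '' S)) (hSpos : volume S ≠ 0)
    (η : ℝ) (hη : η = (volume S).toReal * sSup (f '' S))
    (n : ℕ) (hn : 1 ≤ n) :
    optRate d n P r S f ≤
      ENNReal.ofReal (η * r / d * Real.log n
        + η * Real.log (1 + P / (volume S).toReal ^ (r / d)) + 2 * η * r) := by
  have hVtop : volume S ≠ ⊤ :=
    ((EuclideanSpace.isBounded_setOf_forall_mem_Icc _ _).subset hSsub).measure_lt_top.ne
  have hV : 0 < (volume S).toReal := ENNReal.toReal_pos hSpos hVtop
  obtain ⟨u₀, hu₀⟩ := nonempty_of_measure_ne_zero hSpos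
  have hfF : ∀ u ∈ S, f u ≤ sSup (f '' S) := fun u hu => le_csSup hfbdd (mem_image_of_mem f hu)
  have hF : 0 ≤ sSup (f '' S) := (hf0 u₀).trans (hfF u₀ hu₀)
  have hd0 : d ≠ 0 := Nat.one_le_iff_ne_zero.1 hd
  have hn0 : n ≠ 0 := Nat.one_le_iff_ne_zero.1 hn
  refine (optRate_le_of_volume_eq hd0 hn0 hP.le hr hSmeas hfF
    (ENNReal.ofReal_toReal hVtop).symm hV hF).trans (ENNReal.ofReal_le_ofReal ?_)
  have hη0 : 0 ≤ η := hη ▸ mul_nonneg hV.le hF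
  have hlog := mul_le_mul_of_nonneg_left
    (log_one_add_rpow_mul_add_le hd0 hn0 hr (div_pos hP (rpow_pos_of_pos hV (r / d))).le) hη0
  rw [← hη]
  exact hlog.trans_eq (by ring)

theorem rate_upper_bound (d : ℕ) (hd : 1 ≤ d) (M P r : ℝ) (hM : 0 < M) (hP : 0 < P)
    (hr : 0 ≤ r) (S : Set (EuclideanSpace ℝ (Fin d))) (hSmeas : MeasurableSet S)
    (hSsub : S ⊆ {u : EuclideanSpace ℝ (Fin d) | ∀ i, u i ∈ Set.Icc (0 : ℝ) M})
    (f : EuclideanSpace ℝ (Fin d) → ℝ) (hf0 : ∀ u, 0 ≤ f u)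
    (hfS : ∀ u ∉ S, f u = 0) (hf1 : (∫ u in S, f u) = 1)
    (hfbdd : BddAbove (f '' S)) (hSpos : volume S ≠ 0)
    (η : ℝ) (hη : η = (volume S).toReal * sSup (f '' S))
    (n : ℕ) (hn : 1 ≤ n) :
    optRate d n P r S f ≤
      ENNReal.ofReal (η * r / d * Real.log n
        + η * Real.log (1 + P / (volume S).toReal ^ (r / d)) + 2 * η * r) :=
  rate_upper_bound_general d hd M P r hP hr S hSmeas hSsub f hf0 hfbdd hSpos η hη n hn
end

section
/- Let d ≥ 1 be an integer, let B be a real d×d matrix with determinant 1, let β > 0, and let Λ = {βBx : x ∈ ℤ^d}. For every real r > d there exists a constant K ≥ 1, independent of β, and a Lebesgue-null set A ⊂ ℝ^d such that for every u ∈ ℝ^d \ A one has Σ_{x∈Λ} ‖u − x‖^{−r} ≤ K · (inf_{x∈Λ} ‖u − x‖)^{−r}. -/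
open MeasureTheory Real
open scoped ENNReal BigOperators

/-- The lattice point `β B x` for an integer vector `x`, viewed in Euclidean space. -/
noncomputable def latticePt (d : ℕ) (B : Matrix (Fin d) (Fin d) ℝ) (β : ℝ)
    (x : Fin d → ℤ) : EuclideanSpace ℝ (Fin d) :=
  β • (WithLp.equiv 2 (Fin d → ℝ)).symm (B.mulVec fun i => (x i : ℝ))

/-!
Let `δ` be the distance from `u` to the lattice `Λ`, attained at `z₀ ∈ Λ`. By the triangle
inequality `‖z - z₀‖ ≤ 2 ‖u - z‖` for every `z ∈ Λ`, so the sum is at most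
`δ^{-r} + 2^r S` with `S = ∑_{z ∈ Λ} ‖z‖^{-r}`, a convergent lattice sum since `r > d` (the term
`z = 0` drops out because `0 ^ (-r) = 0` in Lean). Rounding coordinates in a basis `b` of `Λ`
gives `δ ≤ R := ∑ ‖b i‖`, so the sum is at most `(1 + 2^r S R^r) δ^{-r}`. Under `Λ ↦ βΛ`, `S`
scales by `β^{-r}` and `R^r` by `β^r`, so the constant does not depend on `β`. The exceptional
set is `Λ` itself, which is countable.
-/

open Module Submodule Set

lemma norm_sub_rpow_neg_le_two_rpow_mul {E : Type*} [SeminormedAddCommGroup E] {u z z₀ : E}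
    (hmin : ‖u - z₀‖ ≤ ‖u - z‖) (hz : 0 < ‖z - z₀‖) {r : ℝ} (hr : 0 ≤ r) :
    ‖u - z‖ ^ (-r) ≤ 2 ^ r * ‖z - z₀‖ ^ (-r) := by
  have hdist : ‖z - z₀‖ ≤ 2 * ‖u - z‖ := calc
    ‖z - z₀‖ ≤ ‖z - u‖ + ‖u - z₀‖ := norm_sub_le_norm_sub_add_norm_sub z u z₀
    _ ≤ 2 * ‖u - z‖ := by rw [norm_sub_rev]; linarith
  calc ‖u - z‖ ^ (-r) = 2 ^ r * (2 * ‖u - z‖) ^ (-r) := by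
        rw [mul_rpow zero_le_two (norm_nonneg _), ← mul_assoc, ← rpow_add two_pos]; simp
    _ ≤ 2 ^ r * ‖z - z₀‖ ^ (-r) :=
        mul_le_mul_of_nonneg_left (rpow_le_rpow_of_nonpos hz hdist (neg_nonpos.mpr hr))
          (by positivity)

namespace ZLattice

variable {E : Type*} [NormedAddCommGroup E] (L : Submodule ℤ E)

lemma iInf_norm_sub_eq_infDist (u : E) : ⨅ z : L, ‖u - z‖ = Metric.infDist u L := by
  simp [Metric.infDist_eq_iInf, dist_eq_norm]

variable [DiscreteTopology L]

lemma isClosed : IsClosed (L : Set E) :=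
  AddSubgroup.isClosed_of_discrete (H := L.toAddSubgroup)

lemma iInf_norm_sub_pos {u : E} (hu : u ∉ L) : 0 < ⨅ z : L, ‖u - z‖ := by
  rw [iInf_norm_sub_eq_infDist]
  exact ((isClosed L).notMem_iff_infDist_pos ⟨0, L.zero_mem⟩).mp hu

variable [NormedSpace ℝ E] [FiniteDimensional ℝ E]

lemma exists_norm_sub_eq_iInf (u : E) : ∃ z₀ : L, ‖u - z₀‖ = ⨅ z : L, ‖u - z‖ := by
  obtain ⟨z₀, hz₀, h⟩ := (isClosed L).exists_infDist_eq_dist ⟨0, L.zero_mem⟩ u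
  exact ⟨⟨z₀, hz₀⟩, by rw [iInf_norm_sub_eq_infDist, h, dist_eq_norm]⟩

lemma tsum_norm_sub_rpow_le {r : ℝ} (hr : finrank ℤ L < r) (u : E) :
    ∑' z : L, ‖u - z‖ ^ (-r) ≤ (⨅ z : L, ‖u - z‖) ^ (-r) + 2 ^ r * ∑' z : L, ‖z‖ ^ (-r) := by
  classical
  obtain ⟨z₀, hz₀⟩ := exists_norm_sub_eq_iInf L u
  have hr₀ : 0 ≤ r := (Nat.cast_nonneg _).trans hr.le
  have hbound (z : L) : ‖u - z‖ ^ (-r) ≤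
      (Pi.single z₀ (‖u - z₀‖ ^ (-r)) : L → ℝ) z + 2 ^ r * ‖z - z₀‖ ^ (-r) := by
    rcases eq_or_ne z z₀ with rfl | hz
    · simp only [Pi.single_eq_same, le_add_iff_nonneg_right]
      positivity
    · rw [Pi.single_eq_of_ne hz, zero_add]
      exact norm_sub_rpow_neg_le_two_rpow_mul (z₀ := (z₀ : E))
        (hz₀ ▸ ciInf_le ⟨0, by rintro _ ⟨z, rfl⟩; positivity⟩ z)
        (norm_sub_pos_iff.mpr (Subtype.coe_injective.ne hz)) hr₀
  have hsingle := (hasSum_pi_single z₀ (‖u - z₀‖ ^ (-r))).summable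
  have hshift : Summable fun z : L => ‖z - z₀‖ ^ (-r) :=
    (Equiv.subRight z₀).summable_iff.mpr (summable_norm_rpow L (-r) (by linarith))
  calc ∑' z : L, ‖u - z‖ ^ (-r)
      ≤ ∑' z : L, ((Pi.single z₀ (‖u - z₀‖ ^ (-r)) : L → ℝ) z + 2 ^ r * ‖z - z₀‖ ^ (-r)) := by
        refine Summable.tsum_le_tsum hbound ?_ (hsingle.add (hshift.mul_left _))
        simpa only [norm_sub_rev] using summable_norm_sub_rpow L (-r) (by linarith) u
    _ = (⨅ z : L, ‖u - z‖) ^ (-r) + 2 ^ r * ∑' z : L, ‖z‖ ^ (-r) := by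
        rw [Summable.tsum_add hsingle (hshift.mul_left _), tsum_pi_single, tsum_mul_left, hz₀]
        exact congrArg (_ + 2 ^ r * ·) ((Equiv.subRight z₀).tsum_eq fun z => ‖z‖ ^ (-r))

end ZLattice

namespace ZSpan

variable {E ι : Type*} [NormedAddCommGroup E] [NormedSpace ℝ E] [Fintype ι] (b : Basis ι ℝ E)

lemma iInf_norm_sub_le_sum_norm (u : E) : ⨅ z : span ℤ (range b), ‖u - z‖ ≤ ∑ i, ‖b i‖ :=
  (ciInf_le ⟨0, by rintro _ ⟨z, rfl⟩; positivity⟩ (floor b u)).trans (norm_fract_le b u)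

lemma finrank_eq_card : finrank ℤ (span ℤ (range b)) = Fintype.card ι :=
  finrank_eq_card_basis (b.restrictScalars ℤ)

end ZSpan

section LatticeSum

variable {E ι : Type*} [NormedAddCommGroup E] [Fintype ι]

noncomputable def latticeSumConst (v : ι → E) (r : ℝ) : ℝ :=
  1 + 2 ^ r * (∑' x : ι → ℤ, ‖∑ i, x i • v i‖ ^ (-r)) * (∑ i, ‖v i‖) ^ r

lemma one_le_latticeSumConst (v : ι → E) (r : ℝ) : 1 ≤ latticeSumConst v r :=
  le_add_of_nonneg_right (by positivity)

variable [NormedSpace ℝ E]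

lemma latticeSumConst_smul {c : ℝ} (hc : 0 < c) (v : ι → E) (r : ℝ) :
    latticeSumConst (c • v) r = latticeSumConst v r := by
  have hsum (x : ι → ℤ) :
      ‖∑ i, x i • (c • v) i‖ ^ (-r) = c ^ (-r) * ‖∑ i, x i • v i‖ ^ (-r) := by
    simp only [Pi.smul_apply, smul_comm (x _) c, ← Finset.smul_sum, norm_smul,
      norm_of_nonneg hc.le, mul_rpow hc.le (norm_nonneg _)]
  have hnorm : (∑ i, ‖(c • v) i‖) ^ r = c ^ r * (∑ i, ‖v i‖) ^ r := by
    simp only [Pi.smul_apply, norm_smul, norm_of_nonneg hc.le, ← Finset.mul_sum,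
      mul_rpow hc.le (Finset.sum_nonneg fun i _ => norm_nonneg (v i))]
  have hcancel : c ^ (-r) * c ^ r = 1 := by rw [← rpow_add hc]; simp
  simp only [latticeSumConst, tsum_congr hsum, tsum_mul_left, hnorm]
  linear_combination (2 ^ r * (∑' x : ι → ℤ, ‖∑ i, x i • v i‖ ^ (-r)) * (∑ i, ‖v i‖) ^ r) * hcancel

lemma tsum_norm_sub_rpow_le_latticeSumConst_mul (b : Basis ι ℝ E) {r : ℝ}
    (hr : Fintype.card ι < r) {u : E} (hu : u ∉ range fun x : ι → ℤ => ∑ i, x i • b i) :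
    ∑' x : ι → ℤ, ‖u - ∑ i, x i • b i‖ ^ (-r) ≤
      latticeSumConst b r * (⨅ x : ι → ℤ, ‖u - ∑ i, x i • b i‖) ^ (-r) := by
  have : FiniteDimensional ℝ E := b.finiteDimensional_of_finite
  set L := span ℤ (range b)
  let e : (ι → ℤ) ≃ L := (b.restrictScalars ℤ).equivFun.symm.toEquiv
  have he (x : ι → ℤ) : (e x : E) = ∑ i, x i • b i := by
    simp [e, Basis.equivFun_symm_apply]
  have hsum : ∑' x : ι → ℤ, ‖u - ∑ i, x i • b i‖ ^ (-r) = ∑' z : L, ‖u - z‖ ^ (-r) := by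
    simp only [← he]; exact e.tsum_eq fun z : L => ‖u - z‖ ^ (-r)
  have hsum₀ : ∑' x : ι → ℤ, ‖∑ i, x i • b i‖ ^ (-r) = ∑' z : L, ‖z‖ ^ (-r) := by
    simp only [← he]; exact e.tsum_eq fun z : L => ‖z‖ ^ (-r)
  have hinf : ⨅ x : ι → ℤ, ‖u - ∑ i, x i • b i‖ = ⨅ z : L, ‖u - z‖ := by
    simp only [← he]; exact e.iInf_comp (g := fun z : L => ‖u - z‖)
  have huL : u ∉ L := by rwa [mem_span_range_iff_exists_fun, ← mem_range]
  set δ := ⨅ z : L, ‖u - z‖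
  set R := ∑ i, ‖b i‖
  have hδ : 0 < δ := ZLattice.iInf_norm_sub_pos L huL
  have hδR : δ ≤ R := ZSpan.iInf_norm_sub_le_sum_norm b u
  have hRδ : 1 ≤ R ^ r * δ ^ (-r) := by
    rw [rpow_neg hδ.le, ← div_eq_mul_inv, ← div_rpow (hδ.le.trans hδR) hδ.le]
    exact one_le_rpow ((one_le_div hδ).mpr hδR) ((Nat.cast_nonneg _).trans hr.le)
  rw [hsum, hinf, latticeSumConst, hsum₀]
  calc ∑' z : L, ‖u - z‖ ^ (-r) ≤ δ ^ (-r) + 2 ^ r * ∑' z : L, ‖z‖ ^ (-r) :=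
        ZLattice.tsum_norm_sub_rpow_le L (by rwa [ZSpan.finrank_eq_card]) u
    _ ≤ (1 + 2 ^ r * (∑' z : L, ‖z‖ ^ (-r)) * R ^ r) * δ ^ (-r) := by
        have : 0 ≤ 2 ^ r * ∑' z : L, ‖z‖ ^ (-r) := by positivity
        nlinarith

end LatticeSum

lemma exists_basis_latticePt_eq {d : ℕ} {B : Matrix (Fin d) (Fin d) ℝ} (hB : IsUnit B.det) :
    ∃ b : Basis (Fin d) ℝ (EuclideanSpace ℝ (Fin d)),
      ∀ β x, latticePt d B β x = ∑ i, x i • (β • ⇑b) i := by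
  let e : (Fin d → ℝ) ≃ₗ[ℝ] EuclideanSpace ℝ (Fin d) :=
    (B.toLinearEquiv' (B.invertibleOfIsUnitDet hB)).trans (WithLp.linearEquiv 2 ℝ _).symm
  refine ⟨Basis.ofEquivFun e.symm, fun β x => ?_⟩
  have h := (Basis.ofEquivFun e.symm).equivFun_symm_apply (fun i => (x i : ℝ))
  rw [Basis.equivFun_ofEquivFun, LinearEquiv.symm_symm] at h
  simp only [Pi.smul_apply, smul_comm (x _) β, ← Finset.smul_sum, ← Int.cast_smul_eq_zsmul ℝ, ← h]
  rfl

theorem lattice_sum_le_const_mul_min (d : ℕ) (hd : 1 ≤ d)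
    (B : Matrix (Fin d) (Fin d) ℝ) (hB : B.det = 1) (r : ℝ) (hr : (d : ℝ) < r) :
    ∃ K : ℝ, 1 ≤ K ∧ ∀ β : ℝ, 0 < β →
      ∃ A : Set (EuclideanSpace ℝ (Fin d)), volume A = 0 ∧
        ∀ u ∉ A,
          (∑' x : Fin d → ℤ, ‖u - latticePt d B β x‖ ^ (-r)) ≤
            K * (⨅ x : Fin d → ℤ, ‖u - latticePt d B β x‖) ^ (-r) := by
  have : Nonempty (Fin d) := ⟨⟨0, hd⟩⟩
  obtain ⟨b, hb⟩ := exists_basis_latticePt_eq (B := B) (by simp [hB])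
  refine ⟨latticeSumConst b r, one_le_latticeSumConst _ _, fun β hβ =>
    ⟨range (latticePt d B β), (countable_range _).measure_zero _, fun u hu => ?_⟩⟩
  let bβ := b.isUnitSMul (w := fun _ => β) fun _ => hβ.ne'.isUnit
  have hbβ : ⇑bβ = β • ⇑b := funext (b.isUnitSMul_apply _)
  have hpt : latticePt d B β = fun x => ∑ i, x i • bβ i := funext fun x => by rw [hb, hbβ]
  rw [← latticeSumConst_smul hβ, ← hbβ]
  rw [hpt] at hu ⊢
  exact tsum_norm_sub_rpow_le_latticeSumConst_mul bβ (by simpa using hr) hu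
end

section
/- Let d ≥ 1 be an integer, let B be a real d×d matrix with determinant 1, let β > 0, and let Λ = {βBx : x ∈ ℤ^d}. The set A of points u ∈ ℝ^d that do not have a unique nearest lattice point (i.e., u ∈ Λ, or ‖u − x‖ = ‖u − y‖ = inf_{z∈Λ}‖u − z‖ for two distinct x, y ∈ Λ) is a Lebesgue-null set, and for every u ∈ ℝ^d \ A one has lim_{r→∞} (Σ_{x∈Λ} ‖u − x‖^{−r}) · (inf_{x∈Λ} ‖u − x‖)^{r} = 1. -/
open MeasureTheory Real
open scoped ENNReal BigOperators

/-- The set of points that lie on the lattice or that do not have a unique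
nearest lattice point. -/
noncomputable def badSet (d : ℕ) (B : Matrix (Fin d) (Fin d) ℝ) (β : ℝ) :
    Set (EuclideanSpace ℝ (Fin d)) :=
  {u | (∃ x : Fin d → ℤ, u = latticePt d B β x) ∨
    ∃ x y : Fin d → ℤ, x ≠ y ∧
      ‖u - latticePt d B β x‖ = (⨅ z : Fin d → ℤ, ‖u - latticePt d B β z‖) ∧
      ‖u - latticePt d B β y‖ = (⨅ z : Fin d → ℤ, ‖u - latticePt d B β z‖)}

/-!
For `u` off the exceptional set put `g x = ‖u - β B x‖`. Since `∑ g x ^ (-r)` converges for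
`r > d` (a lattice of rank `d`), `g` tends to infinity along the cofinite filter, so it attains a
minimum at some `x₀`, and by the choice of `u` that minimum is positive and strict. The product in
question is then `∑ (g x₀ / g x) ^ r`, whose terms tend to `1` at `x₀` and to `0` elsewhere and
are dominated by `(g x₀ / g x) ^ (d + 1)` once `r ≥ d + 1`; dominated convergence gives the limit
`1`. The exceptional set lies in the lattice together with the perpendicular bisectors of pairs of
distinct lattice points: countably many points and proper affine subspaces, all Lebesgue-null.
-/

open Filter Topology Function

section RpowSums

variable {ι : Type*} {g : ι → ℝ} {s : ℝ}

theorem tendsto_cofinite_atTop_of_summable_rpow_neg (hg : ∀ i, 0 < g i) (hs : 0 < s)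
    (hsum : Summable fun i => g i ^ (-s)) : Tendsto g cofinite atTop := by
  have h₀ : Tendsto (fun i => g i ^ (-s)) cofinite (𝓝[>] 0) :=
    tendsto_nhdsWithin_iff.mpr ⟨hsum.tendsto_cofinite_zero,
      Eventually.of_forall fun i => rpow_pos_of_pos (hg i) _⟩
  have hinv : (-s)⁻¹ < 0 := inv_lt_zero.mpr (neg_lt_zero.mpr hs)
  refine ((tendsto_rpow_neg_nhdsGT_zero hinv).comp h₀).congr fun i => ?_
  rw [comp_apply, rpow_rpow_inv (hg i).le (neg_ne_zero.mpr hs.ne')]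

theorem tendsto_tsum_rpow_neg_mul_rpow_of_forall_lt {i₀ : ι} (h₀ : 0 < g i₀)
    (hlt : ∀ i ≠ i₀, g i₀ < g i) (hsum : Summable fun i => g i ^ (-s)) :
    Tendsto (fun r : ℝ => (∑' i, g i ^ (-r)) * g i₀ ^ r) atTop (𝓝 1) := by
  classical
  have hpos (i : ι) : 0 < g i := by
    rcases eq_or_ne i i₀ with rfl | hi
    · exact h₀
    · exact h₀.trans (hlt i hi)
  have hratio (i : ι) : 0 < g i₀ / g i := div_pos h₀ (hpos i)
  have hratio_le (i : ι) : g i₀ / g i ≤ 1 := by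
    rcases eq_or_ne i i₀ with rfl | hi
    · rw [div_self h₀.ne']
    · exact (div_le_one (hpos i)).mpr (hlt i hi).le
  have hterm (r : ℝ) (i : ι) : g i ^ (-r) * g i₀ ^ r = (g i₀ / g i) ^ r := by
    rw [div_rpow h₀.le (hpos i).le, rpow_neg (hpos i).le, div_eq_mul_inv, mul_comm]
  simp_rw [← tsum_mul_right, hterm]
  rw [← tsum_ite_eq i₀ (fun _ => (1 : ℝ))]
  refine tendsto_tsum_of_dominated_convergence (bound := fun i => (g i₀ / g i) ^ s)
    ((hsum.mul_right (g i₀ ^ s)).congr (hterm s)) (fun i => ?_) ?_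
  · rcases eq_or_ne i i₀ with rfl | hi
    · rw [if_pos rfl, div_self h₀.ne']
      simp only [one_rpow, tendsto_const_nhds]
    · rw [if_neg hi]
      exact tendsto_rpow_atTop_of_base_lt_one _ (by linarith [hratio i])
        ((div_lt_one (hpos i)).mpr (hlt i hi))
  · filter_upwards [eventually_ge_atTop s] with r hr i
    rw [norm_of_nonneg (rpow_nonneg (hratio i).le _)]
    exact rpow_le_rpow_of_exponent_ge (hratio i) (hratio_le i) hr

end RpowSums

theorem summable_norm_sub_linearEquiv_intCast_rpow_neg {ι E : Type*} [Fintype ι]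
    [NormedAddCommGroup E] [NormedSpace ℝ E] [FiniteDimensional ℝ E]
    (e : (ι → ℝ) ≃ₗ[ℝ] E) (u : E) {r : ℝ} (hr : (Fintype.card ι : ℝ) < r) :
    Summable fun x : ι → ℤ => ‖u - e (fun i => x i)‖ ^ (-r) := by
  let b := (Pi.basisFun ℝ ι).map e
  let bℤ := b.restrictScalars ℤ
  have hcoe (x : ι → ℤ) : (bℤ.equivFun.symm x : E) = e (fun i => x i) := by
    have : b.equivFun.symm (fun i => x i) = e (fun i => x i) := by simp [b]
    simp [← this, bℤ, Module.Basis.equivFun_symm_apply, Int.cast_smul_eq_zsmul]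
  have hrank : Module.finrank ℤ (Submodule.span ℤ (Set.range b)) = Fintype.card ι :=
    Module.finrank_eq_card_basis bℤ
  have := ZLattice.summable_norm_sub_rpow _ (-r) (by rw [hrank]; linarith) u
  rw [← bℤ.equivFun.symm.toEquiv.summable_iff] at this
  refine this.congr fun x => ?_
  rw [comp_apply, LinearEquiv.coe_toEquiv, hcoe, norm_sub_rev]

theorem addHaar_range_union_perpBisector_eq_zero {ι E : Type*} [Countable ι]
    [NormedAddCommGroup E] [InnerProductSpace ℝ E] [FiniteDimensional ℝ E] [Nontrivial E]
    [MeasurableSpace E] [BorelSpace E] (μ : Measure E) [μ.IsAddHaarMeasure]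
    {p : ι → E} (hp : Injective p) :
    μ (Set.range p ∪ ⋃ (i) (j) (_ : i ≠ j), (AffineSubspace.perpBisector (p i) (p j) : Set E)) =
      0 :=
  measure_union_null ((Set.countable_range p).measure_zero μ) <|
    measure_iUnion_null fun _ => measure_iUnion_null fun _ => measure_iUnion_null fun hij =>
      Measure.addHaar_affineSubspace μ _ <|
        mt AffineSubspace.perpBisector_eq_top.mp (hp.ne hij)

theorem exists_linearEquiv_latticePt_eq {d : ℕ} {B : Matrix (Fin d) (Fin d) ℝ}
    (hB : IsUnit B.det) {β : ℝ} (hβ : β ≠ 0) :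
    ∃ e : (Fin d → ℝ) ≃ₗ[ℝ] EuclideanSpace ℝ (Fin d),
      ∀ x, latticePt d B β x = e (fun i => x i) :=
  ⟨(B.toLinearEquiv' (B.invertibleOfIsUnitDet hB)).trans <|
      (LinearEquiv.smulOfNeZero ℝ _ β hβ).trans (WithLp.linearEquiv 2 ℝ (Fin d → ℝ)).symm,
    fun _ => rfl⟩

theorem latticePt_injective {d : ℕ} {B : Matrix (Fin d) (Fin d) ℝ} (hB : IsUnit B.det) {β : ℝ}
    (hβ : β ≠ 0) : Injective (latticePt d B β) := by
  obtain ⟨e, he⟩ := exists_linearEquiv_latticePt_eq hB hβ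
  intro x y hxy
  rw [he, he] at hxy
  exact funext fun i => Int.cast_injective (congrFun (e.injective hxy) i)

theorem badSet_subset_range_union_perpBisector (d : ℕ) (B : Matrix (Fin d) (Fin d) ℝ) (β : ℝ) :
    badSet d B β ⊆ Set.range (latticePt d B β) ∪ ⋃ (x) (y) (_ : x ≠ y),
      (AffineSubspace.perpBisector (latticePt d B β x) (latticePt d B β y) : Set _) := by
  rintro u (⟨x, rfl⟩ | ⟨x, y, hxy, hx, hy⟩)
  · exact Or.inl ⟨x, rfl⟩
  · refine Or.inr (Set.mem_iUnion₂.mpr ⟨x, y, Set.mem_iUnion.mpr ⟨hxy, ?_⟩⟩)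
    rw [SetLike.mem_coe, AffineSubspace.mem_perpBisector_iff_dist_eq, dist_eq_norm,
      dist_eq_norm, hx, hy]

theorem lattice_sum_asymptotic (d : ℕ) (hd : 1 ≤ d)
    (B : Matrix (Fin d) (Fin d) ℝ) (hB : B.det = 1) (β : ℝ) (hβ : 0 < β) :
    volume (badSet d B β) = 0 ∧
      ∀ u ∉ badSet d B β,
        Filter.Tendsto
          (fun r : ℝ => (∑' x : Fin d → ℤ, ‖u - latticePt d B β x‖ ^ (-r)) *
            (⨅ x : Fin d → ℤ, ‖u - latticePt d B β x‖) ^ r)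
          Filter.atTop (nhds 1) := by
  have : Nonempty (Fin d) := Fin.pos_iff_nonempty.mp hd
  have hB' : IsUnit B.det := hB ▸ isUnit_one
  obtain ⟨e, he⟩ := exists_linearEquiv_latticePt_eq hB' hβ.ne'
  refine ⟨measure_mono_null (badSet_subset_range_union_perpBisector d B β)
    (addHaar_range_union_perpBisector_eq_zero volume (latticePt_injective hB' hβ.ne')),
    fun u hu => ?_⟩
  set g := fun x => ‖u - latticePt d B β x‖
  have hsum : Summable fun x => g x ^ (-(d + 1 : ℝ)) := by
    simpa [g, he] using summable_norm_sub_linearEquiv_intCast_rpow_neg e u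
      (r := d + 1) (by simp)
  have hpos (x : Fin d → ℤ) : 0 < g x :=
    norm_pos_iff.mpr (sub_ne_zero.mpr fun h => hu (Or.inl ⟨x, h⟩))
  obtain ⟨x₀, hx₀⟩ :=
    (tendsto_cofinite_atTop_of_summable_rpow_neg hpos (by positivity) hsum).exists_forall_le
  have hinf : ⨅ x, g x = g x₀ :=
    le_antisymm (ciInf_le ⟨0, Set.forall_mem_range.mpr fun x => (hpos x).le⟩ x₀) (le_ciInf hx₀)
  have hlt (x) (hx : x ≠ x₀) : g x₀ < g x :=
    (hx₀ x).lt_of_ne fun h => hu (Or.inr ⟨x, x₀, hx, by rw [hinf, h], hinf.symm⟩)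
  rw [hinf]
  exact tendsto_tsum_rpow_neg_mul_rpow_of_forall_lt (hpos x₀) hlt hsum
end

section
/- One has liminf_{n→∞} R_n / log n ≥ max(r/d − 1, 0). -/
open MeasureTheory Real
open scoped ENNReal BigOperators

/-! Put `k^d ≤ n` antennas, `k = ⌊n^(1/d)⌋`, on a uniform grid of the cube `[0,M]^d`, repeating
points to fill the `n` slots. Every user is then within `ρ = √d M / k ≍ n^(-1/d)` of an antenna, so
the nearest antenna alone gives `R_n ≥ log (1 + (P/n) ρ^(-r)) ≥ (r/d - 1) log n - O(1)`. -/

open Filter Set Topology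

lemma exists_fin_abs_sub_le_one {k : ℕ} (hk : 0 < k) {s : ℝ} (hs : s ∈ Icc 0 (k : ℝ)) :
    ∃ a : Fin k, |s - a| ≤ 1 := by
  have hceil : ⌈s⌉₊ ≤ k := Nat.ceil_le.mpr hs.2
  refine ⟨⟨⌈s⌉₊ - 1, by omega⟩, abs_sub_le_iff.mpr ⟨?_, ?_⟩⟩
  · have : (⌈s⌉₊ : ℝ) ≤ ((⌈s⌉₊ - 1 : ℕ) : ℝ) + 1 := by norm_cast; omega
    linarith [Nat.le_ceil s]
  · have : ((⌈s⌉₊ - 1 : ℕ) : ℝ) ≤ ⌈s⌉₊ := by exact_mod_cast Nat.sub_le _ _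
    linarith [Nat.ceil_lt_add_one hs.1]

lemma EuclideanSpace.norm_le_sqrt_card_mul {ι : Type*} [Fintype ι] {x : EuclideanSpace ℝ ι}
    {δ : ℝ} (hδ : 0 ≤ δ) (hx : ∀ i, |x i| ≤ δ) : ‖x‖ ≤ √(Fintype.card ι) * δ := by
  rw [EuclideanSpace.norm_eq, ← Real.sqrt_sq hδ, ← Real.sqrt_mul (Nat.cast_nonneg _)]
  refine Real.sqrt_le_sqrt ?_
  calc ∑ i, ‖x i‖ ^ 2 ≤ ∑ _i : ι, δ ^ 2 :=
        Finset.sum_le_sum fun i _ => by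
          rw [Real.norm_eq_abs]; exact pow_le_pow_left₀ (abs_nonneg _) (hx i) 2
    _ = Fintype.card ι * δ ^ 2 := by simp

noncomputable def gridPoint (d k : ℕ) (M : ℝ) (j : Fin d → Fin k) : EuclideanSpace ℝ (Fin d) :=
  WithLp.toLp 2 fun i => M * j i / k

lemma exists_norm_sub_gridPoint_le {d k : ℕ} (hk : 0 < k) {M : ℝ} (hM : 0 < M)
    {u : EuclideanSpace ℝ (Fin d)} (hu : ∀ i, u i ∈ Icc 0 M) :
    ∃ j : Fin d → Fin k, ‖u - gridPoint d k M j‖ ≤ √d * M / k := by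
  have hk' : (0 : ℝ) < k := Nat.cast_pos.mpr hk
  have hscaled : ∀ i, u i * k / M ∈ Icc 0 (k : ℝ) := fun i =>
    ⟨by have := (hu i).1; positivity,
      (div_le_iff₀ hM).mpr (by nlinarith [(hu i).2])⟩
  choose j hj using fun i => exists_fin_abs_sub_le_one hk (hscaled i)
  refine ⟨j, ?_⟩
  rw [mul_div_assoc]
  simpa using EuclideanSpace.norm_le_sqrt_card_mul (x := u - gridPoint d k M j) (by positivity)
    fun i => by
      have hcoord : u i - M * j i / k = M / k * (u i * k / M - j i) := by field_simp
      simpa [gridPoint, hcoord, abs_mul, abs_of_pos (div_pos hM hk')] using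
        mul_le_mul_of_nonneg_left (hj i) (div_pos hM hk').le

lemma exists_fin_forall_exists_eq {ι β : Type*} [Fintype ι] [Nonempty ι] (g : ι → β) {n : ℕ}
    (hn : Fintype.card ι ≤ n) : ∃ X : Fin n → β, ∀ j, ∃ i, X i = g j := by
  let e : ι ↪ Fin n := (Fintype.equivFin ι).toEmbedding.trans (Fin.castLEEmb hn)
  exact ⟨g ∘ Function.invFun e, fun j => ⟨e j, by simp [Function.leftInverse_invFun e.injective j]⟩⟩

lemma rpow_neg_le_sum_norm_sub_rpow_neg {E ι : Type*} [NormedAddCommGroup E] [Fintype ι]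
    {X : ι → E} {u : E} {ρ r : ℝ} (hr : 0 ≤ r) (hu : u ∉ range X) {i : ι}
    (hi : ‖u - X i‖ ≤ ρ) : ρ ^ (-r) ≤ ∑ i, ‖u - X i‖ ^ (-r) := by
  have hpos : 0 < ‖u - X i‖ := norm_pos_iff.mpr (sub_ne_zero.mpr fun h => hu ⟨i, h.symm⟩)
  calc ρ ^ (-r) ≤ ‖u - X i‖ ^ (-r) := rpow_le_rpow_of_nonpos hpos hi (neg_nonpos.mpr hr)
    _ ≤ ∑ i, ‖u - X i‖ ^ (-r) :=
      Finset.single_le_sum (f := fun i => ‖u - X i‖ ^ (-r))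
        (fun i _ => rpow_nonneg (norm_nonneg _) _) (Finset.mem_univ i)

lemma ofReal_integral_le_lintegral_ofReal {α : Type*} [MeasurableSpace α] {μ : Measure α}
    {f : α → ℝ} (hf : Integrable f μ) :
    ENNReal.ofReal (∫ u, f u ∂μ) ≤ ∫⁻ u, ENNReal.ofReal (f u) ∂μ := by
  rw [integral_eq_lintegral_pos_part_sub_lintegral_neg_part hf]
  exact (ENNReal.ofReal_le_ofReal (sub_le_self _ ENNReal.toReal_nonneg)).trans
    ENNReal.ofReal_toReal_le

lemma ofReal_le_lintegral_ofReal_mul {α : Type*} [MeasurableSpace α] {μ : Measure α}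
    {g f : α → ℝ} {c : ℝ} (hg : 0 ≤ g) (hcg : ∀ᵐ u ∂μ, c ≤ g u) (hf : ∫ u, f u ∂μ = 1) :
    ENNReal.ofReal c ≤ ∫⁻ u, ENNReal.ofReal (g u * f u) ∂μ := by
  have hfi : Integrable f μ := by
    by_contra h
    simp [integral_undef h] at hf
  calc ENNReal.ofReal c = ENNReal.ofReal c * ENNReal.ofReal (∫ u, f u ∂μ) := by simp [hf]
    _ ≤ ENNReal.ofReal c * ∫⁻ u, ENNReal.ofReal (f u) ∂μ :=
      mul_le_mul_right (ofReal_integral_le_lintegral_ofReal hfi) _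
    _ = ∫⁻ u, ENNReal.ofReal c * ENNReal.ofReal (f u) ∂μ :=
      (lintegral_const_mul' _ _ ENNReal.ofReal_ne_top).symm
    _ ≤ ∫⁻ u, ENNReal.ofReal (g u * f u) ∂μ := lintegral_mono_ae <| hcg.mono fun u hu => by
      rw [ENNReal.ofReal_mul (hg u)]
      exact mul_le_mul_left (ENNReal.ofReal_le_ofReal hu) _

lemma ofReal_le_liminf_div_ofReal {ι : Type*} {l : Filter ι} {L : ι → ℝ} {R : ι → ℝ≥0∞}
    {a C : ℝ} (hL : Tendsto L l atTop) (hR : ∀ᶠ i in l, ENNReal.ofReal (a * L i + C) ≤ R i) :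
    ENNReal.ofReal a ≤ liminf (fun i => R i / ENNReal.ofReal (L i)) l := by
  have hlim : Tendsto (fun i => ENNReal.ofReal (a + C / L i)) l (𝓝 (ENNReal.ofReal a)) := by
    refine ENNReal.tendsto_ofReal ?_
    simpa [div_eq_mul_inv] using tendsto_const_nhds.add (hL.inv_tendsto_atTop.const_mul C)
  rw [le_liminf_iff]
  intro b hb
  filter_upwards [(tendsto_order.mp hlim).1 b hb, hR, hL.eventually_gt_atTop 0]
    with i hbi hRi hLi
  calc b < ENNReal.ofReal (a + C / L i) := hbi
    _ = ENNReal.ofReal (a * L i + C) / ENNReal.ofReal (L i) := by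
      rw [← ENNReal.ofReal_div_of_pos hLi, add_div, mul_div_cancel_right₀ _ hLi.ne']
    _ ≤ R i / ENNReal.ofReal (L i) := ENNReal.div_le_div_right hRi _

lemma ofReal_log_le_optRate {d n k : ℕ} [NeZero d] {M P r : ℝ} (hM : 0 < M) (hP : 0 ≤ P)
    (hr : 0 ≤ r) (hk : 0 < k) (hkn : k ^ d ≤ n) {S : Set (EuclideanSpace ℝ (Fin d))}
    (hS : MeasurableSet S)
    (hSsub : S ⊆ {u : EuclideanSpace ℝ (Fin d) | ∀ i, u i ∈ Icc 0 M})
    {f : EuclideanSpace ℝ (Fin d) → ℝ} (hf : ∫ u in S, f u = 1) :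
    ENNReal.ofReal (log (1 + P / n * (√d * M / k) ^ (-r))) ≤ optRate d n P r S f := by
  have : Nonempty (Fin d → Fin k) := ⟨fun _ => ⟨0, hk⟩⟩
  obtain ⟨X, hX⟩ := exists_fin_forall_exists_eq (gridPoint d k M) (n := n) (by simpa using hkn)
  refine le_iSup_of_le X (ofReal_le_lintegral_ofReal_mul
    (fun u => log_nonneg (le_add_of_nonneg_right (by positivity))) ?_ hf)
  -- off the finitely many antennas, so that no term `‖u - X i‖ ^ (-r)` is the junk `0 ^ (-r) = 0`
  filter_upwards [ae_restrict_mem hS,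
    ae_restrict_of_ae ((finite_range X).countable.ae_notMem volume)] with u huS huX
  obtain ⟨j, hj⟩ := exists_norm_sub_gridPoint_le hk hM (hSsub huS)
  obtain ⟨i, hi⟩ := hX j
  gcongr
  exact rpow_neg_le_sum_norm_sub_rpow_neg hr huX (hi ▸ hj)

lemma log_div_floor_le {c y : ℝ} (hc : 0 < c) (hy : 2 ≤ y) :
    log (c / ⌊y⌋₊) ≤ log (2 * c) - log y := by
  have hfloor : y / 2 ≤ ⌊y⌋₊ := by linarith [Nat.sub_one_lt_floor y]
  calc log (c / ⌊y⌋₊) ≤ log (c / (y / 2)) :=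
        log_le_log (div_pos hc (by linarith))
          (div_le_div_of_nonneg_left hc.le (by positivity) hfloor)
    _ = log (2 * c) - log y := by
        rw [← log_div (by positivity) (by positivity)]; congr 1; field_simp

lemma floor_rpow_inv_pow_le (n d : ℕ) (hd : d ≠ 0) : ⌊(n : ℝ) ^ (d⁻¹ : ℝ)⌋₊ ^ d ≤ n := by
  have := pow_le_pow_left₀ (Nat.cast_nonneg (α := ℝ) _)
    (Nat.floor_le (by positivity : (0 : ℝ) ≤ (n : ℝ) ^ (d⁻¹ : ℝ))) d
  rw [rpow_inv_natCast_pow (Nat.cast_nonneg n) hd] at this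
  exact_mod_cast this

lemma le_log_one_add_mul_rpow_neg {d n : ℕ} {c P r : ℝ} (hc : 0 < c) (hP : 0 < P)
    (hr : 0 ≤ r) (hn : 2 ≤ (n : ℝ) ^ (d⁻¹ : ℝ)) :
    (r / d - 1) * log n + (log P - r * log (2 * c)) ≤
      log (1 + P / n * (c / ⌊(n : ℝ) ^ (d⁻¹ : ℝ)⌋₊) ^ (-r)) := by
  have hn0 : (0 : ℝ) < n := by
    rcases Nat.eq_zero_or_pos n with rfl | h
    · linarith [Nat.cast_zero (R := ℝ) ▸ zero_rpow_le_one (d⁻¹ : ℝ)]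
    · exact_mod_cast h
  have hk : (0 : ℝ) < ⌊(n : ℝ) ^ (d⁻¹ : ℝ)⌋₊ := Nat.cast_pos.mpr (Nat.floor_pos.mpr (by linarith))
  have hlog := log_div_floor_le hc hn
  rw [log_rpow hn0] at hlog
  calc (r / d - 1) * log n + (log P - r * log (2 * c))
      ≤ log P - log n - r * log (c / ⌊(n : ℝ) ^ (d⁻¹ : ℝ)⌋₊) := by
        have hexp : (r / d - 1) * log n = r * ((d : ℝ)⁻¹ * log n) - log n := by ring
        linarith [mul_le_mul_of_nonneg_left hlog hr]
    _ = log (P / n * (c / ⌊(n : ℝ) ^ (d⁻¹ : ℝ)⌋₊) ^ (-r)) := by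
        rw [log_mul (by positivity) (by positivity), log_div hP.ne' hn0.ne',
          log_rpow (by positivity)]; ring
    _ ≤ log (1 + P / n * (c / ⌊(n : ℝ) ^ (d⁻¹ : ℝ)⌋₊) ^ (-r)) :=
        log_le_log (by positivity) (by linarith)

theorem macromultiplexing_liminf_lower_bound_general (d : ℕ) (M P r : ℝ)
    (hM : 0 < M) (hP : 0 < P)
    (S : Set (EuclideanSpace ℝ (Fin d))) (hSmeas : MeasurableSet S)
    (hSsub : S ⊆ {u : EuclideanSpace ℝ (Fin d) | ∀ i, u i ∈ Set.Icc (0 : ℝ) M})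
    (f : EuclideanSpace ℝ (Fin d) → ℝ) (hf1 : (∫ u in S, f u) = 1) :
    ENNReal.ofReal (max (r / d - 1) 0) ≤
      Filter.liminf
        (fun n : ℕ => optRate d n P r S f / ENNReal.ofReal (Real.log n))
        Filter.atTop := by
  rcases le_or_gt (r / d - 1) 0 with ha | ha
  · simp [max_eq_right ha]
  rw [max_eq_left ha.le]
  have hd : d ≠ 0 := by rintro rfl; norm_num at ha
  have : NeZero d := ⟨hd⟩
  have hr : 0 ≤ r :=
    ((div_pos_iff_of_pos_right (Nat.cast_pos.mpr (Nat.pos_of_ne_zero hd))).mp (by linarith)).le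
  have hroot : ∀ᶠ n : ℕ in atTop, 2 ≤ (n : ℝ) ^ (d⁻¹ : ℝ) :=
    ((tendsto_rpow_atTop (by positivity)).comp tendsto_natCast_atTop_atTop).eventually_ge_atTop 2
  refine ofReal_le_liminf_div_ofReal (tendsto_log_atTop.comp tendsto_natCast_atTop_atTop)
    (C := log P - r * log (2 * (√d * M))) ?_
  filter_upwards [hroot] with n hn
  have hk : 0 < ⌊(n : ℝ) ^ (d⁻¹ : ℝ)⌋₊ := Nat.floor_pos.mpr (by linarith)
  exact (ENNReal.ofReal_le_ofReal (le_log_one_add_mul_rpow_neg (by positivity) hP hr hn)).trans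
    (ofReal_log_le_optRate hM hP.le hr hk (floor_rpow_inv_pow_le n d hd) hSmeas hSsub hf1)

theorem macromultiplexing_liminf_lower_bound (d : ℕ) (hd : 1 ≤ d) (M P r : ℝ)
    (hM : 0 < M) (hP : 0 < P) (hr : 0 ≤ r)
    (S : Set (EuclideanSpace ℝ (Fin d))) (hSmeas : MeasurableSet S)
    (hSsub : S ⊆ {u : EuclideanSpace ℝ (Fin d) | ∀ i, u i ∈ Set.Icc (0 : ℝ) M})
    (f : EuclideanSpace ℝ (Fin d) → ℝ) (hf0 : ∀ u, 0 ≤ f u)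
    (hfS : ∀ u ∉ S, f u = 0) (hf1 : (∫ u in S, f u) = 1) :
    ENNReal.ofReal (max (r / d - 1) 0) ≤
      Filter.liminf
        (fun n : ℕ => optRate d n P r S f / ENNReal.ofReal (Real.log n))
        Filter.atTop :=
  macromultiplexing_liminf_lower_bound_general d M P r hM hP S hSmeas hSsub f hf1
end

section
/- Let d = 1, M > 0, S = [0,M], and f = 1/M on S. Then for every integer n ≥ 1, the supremum R̃_n of R̃(X) over all n-tuples X of points of ℝ equals log(n/M) + 1 + log 2 (that is, R̃_n = log(n/M) + log(2e)), and the supremum is attained. -/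
open MeasureTheory Real
open scoped ENNReal BigOperators

/-- The logarithmic quantization objective for points `X` in a one-dimensional
cell `[0, M]` with the uniform density `1/M`. -/
noncomputable def logQuantObj (M : ℝ) (n : ℕ) (X : Fin n → ℝ) : ℝ :=
  ∫ u in Set.Icc (0 : ℝ) M, Real.log (1 / ⨅ i, |u - X i|) / M

/-!
Let `g u = min_i |u - x_i|`. The set `{g < s}` is covered by `n` intervals of length `2 s`,
so the layer-cake formula gives, for every `r > 0`,
`∫ (log r - log g)⁺ = ∫_0^∞ |{log r - log g > t}| dt ≤ ∫_0^∞ |{g < r e^{-t}}| dt`,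
which is at most `∫_0^∞ 2 n r e^{-t} dt = 2 n r`.
Hence `∫_{[0,M]} log (1/g) ≤ 2 n r - M log r`, which for `r = M / (2 n)` is
`M (1 + log (2 n / M))`. The midpoints of the `n` cells of length `M / n` attain this bound:
on each cell `g` is the distance to its midpoint, and `∫_{-r}^{r} log |v| dv = 2 (r log r - r)`.
-/

open Set

section LayerCake

variable {α : Type*} [MeasurableSpace α] {μ : Measure α} {g : α → ℝ} {r : ℝ}
  {c : ℝ≥0∞}

theorem lintegral_ofReal_log_sub_log_le (hg : AEMeasurable g μ) (hr : 0 < r)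
    (hμ : ∀ s > 0, μ {a | g a < s} ≤ c * ENNReal.ofReal s) :
    ∫⁻ a, ENNReal.ofReal (log r - log (g a)) ∂μ ≤ c * ENNReal.ofReal r := by
  have hmeas : AEMeasurable (fun a => max (log r - log (g a)) 0) μ :=
    ((measurable_const.sub measurable_log).comp_aemeasurable hg).max aemeasurable_const
  have hsub : ∀ t > 0, {a | t < max (log r - log (g a)) 0} ⊆ {a | g a < r * exp (-t)} := by
    intro t ht a ha
    simp only [mem_ofPred_eq, lt_max_iff, ht.not_gt, or_false] at ha ⊢
    rcases le_or_gt (g a) 0 with hga | hga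
    · exact hga.trans_lt (by positivity)
    · rw [← log_lt_log_iff hga (by positivity), log_mul hr.ne' (exp_pos _).ne', log_exp]
      linarith
  calc ∫⁻ a, ENNReal.ofReal (log r - log (g a)) ∂μ
      = ∫⁻ a, ENNReal.ofReal (max (log r - log (g a)) 0) ∂μ := by
        simp only [ENNReal.ofReal_max, ENNReal.ofReal_zero, max_zero]
    _ = ∫⁻ t in Ioi 0, μ {a | t < max (log r - log (g a)) 0} :=
        lintegral_eq_lintegral_meas_lt μ (ae_of_all _ fun _ => le_max_right _ _) hmeas
    _ ≤ ∫⁻ t in Ioi 0, c * ENNReal.ofReal r * ENNReal.ofReal (exp (-t)) := by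
        refine setLIntegral_mono' measurableSet_Ioi fun t ht => ?_
        rw [mul_assoc, ← ENNReal.ofReal_mul hr.le]
        exact (measure_mono (hsub t ht)).trans (hμ _ (by positivity))
    _ = c * ENNReal.ofReal r := by
        rw [lintegral_const_mul _ (by fun_prop), ← ofReal_integral_eq_lintegral_ofReal
          (integrableOn_exp_neg_Ioi 0) (ae_of_all _ fun _ => (exp_pos _).le),
          integral_exp_neg_Ioi_zero, ENNReal.ofReal_one, mul_one]

theorem sub_le_integral_log_of_meas_lt_le [IsFiniteMeasure μ]
    (hg : AEMeasurable g μ) (hint : Integrable (fun a => log (g a)) μ)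
    (hr : 0 < r) (hc : c ≠ ∞) (hμ : ∀ s > 0, μ {a | g a < s} ≤ c * ENNReal.ofReal s) :
    μ.real univ * log r - c.toReal * r ≤ ∫ a, log (g a) ∂μ := by
  have hshifted : ∫ a, (log r - log (g a)) ∂μ ≤ c.toReal * r := by
    have hbound := ENNReal.toReal_mono (ENNReal.mul_ne_top hc ENNReal.ofReal_ne_top)
      (lintegral_ofReal_log_sub_log_le hg hr hμ)
    rw [ENNReal.toReal_mul, ENNReal.toReal_ofReal hr.le] at hbound
    rw [integral_eq_lintegral_pos_part_sub_lintegral_neg_part (f := fun a => log r - log (g a))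
      ((integrable_const _).sub hint)]
    linarith [ENNReal.toReal_nonneg (a := ∫⁻ a, ENNReal.ofReal (-(log r - log (g a))) ∂μ)]
  rw [integral_sub (integrable_const _) hint, integral_const, smul_eq_mul] at hshifted
  linarith

end LayerCake

theorem integral_log_abs_sub_center (x r : ℝ) :
    ∫ u in (x - r)..(x + r), log |u - x| = 2 * (r * log r - r) := by
  rw [intervalIntegral.integral_comp_sub_right (fun v => log |v|), sub_sub_cancel_left,
    add_sub_cancel_left]
  simp only [log_abs, integral_log, log_neg_eq_log]
  ring

section NearestDist

variable {ι : Type*} [Fintype ι] (X : ι → ℝ)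

theorem ciInf_abs_sub_le (u : ℝ) (i : ι) : ⨅ j, |u - X j| ≤ |u - X i| :=
  ciInf_le (Finite.bddBelow_range _) i

theorem measurable_ciInf_abs_sub : Measurable fun u => ⨅ i, |u - X i| :=
  Measurable.iInf fun _ => (measurable_id.sub_const _).abs

theorem ciInf_abs_sub_eq_of_separated {r u : ℝ} {i : ι} (hu : |u - X i| ≤ r)
    (hsep : ∀ j ≠ i, 2 * r ≤ |X i - X j|) : ⨅ j, |u - X j| = |u - X i| := by
  have : Nonempty ι := ⟨i⟩
  refine (ciInf_abs_sub_le X u i).antisymm (le_ciInf fun j => ?_)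
  rcases eq_or_ne j i with rfl | hj
  · exact le_rfl
  · have := hsep j hj
    have := abs_sub_le (X i) u (X j)
    rw [abs_sub_comm (X i) u] at this
    linarith

theorem integral_log_ciInf_abs_sub_of_separated {r : ℝ} (hr : 0 ≤ r) {i : ι}
    (hsep : ∀ j ≠ i, 2 * r ≤ |X i - X j|) :
    ∫ u in (X i - r)..(X i + r), log (⨅ j, |u - X j|) = 2 * (r * log r - r) := by
  rw [← integral_log_abs_sub_center (X i) r]
  refine intervalIntegral.integral_congr fun u hu => ?_
  rw [uIcc_of_le (by linarith)] at hu
  have hu' : |u - X i| ≤ r := abs_sub_le_iff.2 ⟨by linarith [hu.2], by linarith [hu.1]⟩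
  rw [ciInf_abs_sub_eq_of_separated X hu' hsep]

variable [Nonempty ι]

theorem exists_ciInf_abs_sub_eq (u : ℝ) : ∃ i, ⨅ j, |u - X j| = |u - X i| :=
  (exists_eq_ciInf_of_finite (f := fun j => |u - X j|)).imp fun _ h => h.symm

theorem volume_ciInf_abs_sub_lt_le (s : ℝ) :
    volume {u | ⨅ i, |u - X i| < s} ≤ 2 * Fintype.card ι * ENNReal.ofReal s := by
  calc volume {u | ⨅ i, |u - X i| < s}
      ≤ volume (⋃ i, Metric.ball (X i) s) := by
        refine measure_mono fun u hu => ?_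
        obtain ⟨i, hi⟩ := exists_ciInf_abs_sub_eq X u
        exact mem_iUnion.2 ⟨i, by rw [Metric.mem_ball, dist_eq, ← hi]; exact hu⟩
    _ ≤ ∑ i, volume (Metric.ball (X i) s) := measure_iUnion_fintype_le _ _
    _ = 2 * Fintype.card ι * ENNReal.ofReal s := by
        simp only [Real.volume_ball, ENNReal.ofReal_mul zero_le_two, Finset.sum_const,
          Finset.card_univ, nsmul_eq_mul, ENNReal.ofReal_ofNat]
        ring

theorem intervalIntegrable_log_ciInf_abs_sub (a b : ℝ) :
    IntervalIntegrable (fun u => log (⨅ i, |u - X i|)) volume a b := by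
  have hlog : ∀ i, IntervalIntegrable (fun u => |log (u - X i)|) volume a b := fun i => by
    have hshift := intervalIntegral.intervalIntegrable_log' (a := a - X i) (b := b - X i)
    simpa using (hshift.comp_sub_right (X i)).abs
  refine (IntervalIntegrable.sum Finset.univ fun i _ => hlog i).mono_fun'
    (measurable_log.comp (measurable_ciInf_abs_sub X)).aestronglyMeasurable
    (ae_of_all _ fun u => ?_)
  obtain ⟨i, hi⟩ := exists_ciInf_abs_sub_eq X u
  simp only [norm_eq_abs, hi, log_abs, Finset.sum_apply]
  exact Finset.single_le_sum (f := fun i => |log (u - X i)|) (fun _ _ => abs_nonneg _)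
    (Finset.mem_univ i)

theorem mul_log_sub_le_integral_log_ciInf_abs_sub {M : ℝ} (hM : 0 < M) :
    M * log (M / (2 * Fintype.card ι)) - M ≤ ∫ u in Icc 0 M, log (⨅ i, |u - X i|) := by
  have hcard : (0 : ℝ) < Fintype.card ι := by exact_mod_cast Fintype.card_pos
  have hbound := sub_le_integral_log_of_meas_lt_le (μ := volume.restrict (Icc 0 M))
    (c := 2 * Fintype.card ι) (measurable_ciInf_abs_sub X).aemeasurable
    ((intervalIntegrable_iff_integrableOn_Icc_of_le hM.le).1
      (intervalIntegrable_log_ciInf_abs_sub X 0 M))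
    (r := M / (2 * Fintype.card ι)) (by positivity) (by finiteness)
    fun s _ => (Measure.restrict_apply_le _ _).trans (volume_ciInf_abs_sub_lt_le X s)
  simp only [measureReal_def, Measure.restrict_apply_univ, Real.volume_Icc, sub_zero,
    ENNReal.toReal_ofReal hM.le, ENNReal.toReal_mul, ENNReal.toReal_ofNat,
    ENNReal.toReal_natCast] at hbound
  convert hbound using 2
  field_simp

end NearestDist

noncomputable def cellMidpoints (M : ℝ) (n : ℕ) (i : Fin n) : ℝ :=
  (2 * i + 1) * (M / (2 * n))

theorem cellMidpoints_separated {M : ℝ} (hM : 0 ≤ M) {n : ℕ} {i j : Fin n}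
    (hij : j ≠ i) :
    2 * (M / (2 * n)) ≤ |cellMidpoints M n i - cellMidpoints M n j| := by
  have hdist : (1 : ℝ) ≤ |(i : ℝ) - j| := by
    have : (1 : ℤ) ≤ |(i : ℤ) - j| := Int.one_le_abs (sub_ne_zero.2 (by omega))
    exact_mod_cast this
  have hr : 0 ≤ M / (2 * n) := by positivity
  rw [show cellMidpoints M n i - cellMidpoints M n j = 2 * (i - j) * (M / (2 * n)) by
    simp only [cellMidpoints]; ring, abs_mul, abs_mul, abs_two, abs_of_nonneg hr]
  nlinarith

theorem integral_log_ciInf_abs_sub_cellMidpoints {M : ℝ} (hM : 0 ≤ M) {n : ℕ} (hn : 1 ≤ n) :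
    ∫ u in Icc 0 M, log (⨅ i, |u - cellMidpoints M n i|) = M * log (M / (2 * n)) - M := by
  have : Nonempty (Fin n) := ⟨⟨0, hn⟩⟩
  set r := M / (2 * n) with hr_def
  have hr : 0 ≤ r := by positivity
  have hM_eq : M = 2 * n * r := by rw [hr_def]; field_simp
  have hcell : ∀ k (hk : k < n), 2 * k * r = cellMidpoints M n ⟨k, hk⟩ - r ∧
      2 * (k + 1 : ℕ) * r = cellMidpoints M n ⟨k, hk⟩ + r := fun k hk => by
    simp only [cellMidpoints, ← hr_def]; push_cast; constructor <;> ring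
  have hsum := intervalIntegral.sum_integral_adjacent_intervals (a := fun k : ℕ => 2 * k * r)
    (n := n) fun k _ => intervalIntegrable_log_ciInf_abs_sub (cellMidpoints M n) _ _
  rw [Nat.cast_zero, mul_zero, zero_mul, ← hM_eq] at hsum
  have hterm : ∀ k ∈ Finset.range n,
      ∫ u in (2 * k * r)..(2 * (k + 1 : ℕ) * r), log (⨅ i, |u - cellMidpoints M n i|) =
        2 * (r * log r - r) := fun k hk => by
    obtain ⟨h0, h1⟩ := hcell k (Finset.mem_range.1 hk)
    rw [h0, h1]
    exact integral_log_ciInf_abs_sub_of_separated _ hr fun j hj => cellMidpoints_separated hM hj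
  rw [integral_Icc_eq_integral_Ioc, ← intervalIntegral.integral_of_le hM, ← hsum,
    Finset.sum_congr rfl hterm]
  simp only [Finset.sum_const, Finset.card_range, nsmul_eq_mul]
  rw [hM_eq]; ring

theorem logQuantObj_eq (M : ℝ) (n : ℕ) (X : Fin n → ℝ) :
    logQuantObj M n X = -(∫ u in Icc 0 M, log (⨅ i, |u - X i|)) / M := by
  simp only [logQuantObj, one_div, log_inv, integral_div, integral_neg]

theorem one_dim_uniform_opt (M : ℝ) (hM : 0 < M) (n : ℕ) (hn : 1 ≤ n) :
    IsGreatest (Set.range fun X : Fin n → ℝ => logQuantObj M n X)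
      (Real.log (n / M) + 1 + Real.log 2) := by
  have : Nonempty (Fin n) := ⟨⟨0, hn⟩⟩
  have hvalue : Real.log (n / M) + 1 + Real.log 2 = -(M * log (M / (2 * n)) - M) / M := by
    have hn0 : (n : ℝ) ≠ 0 := by positivity
    rw [log_div hM.ne' (by positivity), log_div (by positivity) hM.ne', log_mul two_ne_zero hn0]
    field_simp
    ring
  refine ⟨⟨cellMidpoints M n, ?_⟩, ?_⟩
  · change logQuantObj M n (cellMidpoints M n) = _
    rw [hvalue, logQuantObj_eq, integral_log_ciInf_abs_sub_cellMidpoints hM.le hn]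
  · rintro _ ⟨X, rfl⟩
    change logQuantObj M n X ≤ _
    rw [hvalue, logQuantObj_eq]
    have hbound := mul_log_sub_le_integral_log_ciInf_abs_sub X hM
    rw [Fintype.card_fin] at hbound
    gcongr
end

section
/- Let M > 0, S = [0,M], f = 1/M on S, and for an integer n ≥ 1 let X be the uniform midpoint codebook X = { (2i−1)M/(2n) : i = 1, …, n }. Then R̃(X) = log(n/M) + 1 + log 2. -/
/-!
Cut `[0, M]` into the `n` cells `[2ih, 2(i+1)h]` with `h = M / (2n)`. On the `i`-th cell the nearest
codepoint is its midpoint `(2i+1)h`, so the integrand is `-log |u - (2i+1)h|`, whose integral over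
the cell is `∫_{-h}^{h} -log |t| dt = 2h - 2h log h`. Summing the `n` cells and dividing by
`M = 2nh` gives `1 - log h = log (n / M) + 1 + log 2`.
-/

open MeasureTheory Real Set intervalIntegral

noncomputable def distMidpoints (n : ℕ) (h u : ℝ) : ℝ :=
  ⨅ j : Fin n, |u - (2 * (j : ℝ) + 1) * h|

theorem integral_log_sub_symm (c h : ℝ) :
    ∫ u in (c - h)..(c + h), log (u - c) = 2 * (h * log h - h) := by
  rw [integral_comp_sub_right (fun x => log x) c, sub_sub_cancel_left, add_sub_cancel_left,
    integral_log, log_neg_eq_log]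
  ring

theorem abs_sub_odd_mul_le_of_mem_Icc {h u : ℝ} {i : ℤ}
    (hu : u ∈ Icc (2 * i * h) (2 * (i + 1) * h)) (j : ℤ) :
    |u - (2 * i + 1) * h| ≤ |u - (2 * j + 1) * h| := by
  have hh : 0 ≤ h := by linarith [hu.1.trans hu.2]
  have near : |u - (2 * i + 1) * h| ≤ h := abs_le.mpr ⟨by linarith [hu.1], by linarith [hu.2]⟩
  rcases lt_trichotomy j i with hji | rfl | hji
  · have : (j : ℝ) + 1 ≤ i := by exact_mod_cast hji
    exact near.trans (le_abs.mpr (Or.inl (by nlinarith [hu.1])))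
  · exact le_rfl
  · have : (i : ℝ) + 1 ≤ j := by exact_mod_cast hji
    exact near.trans (le_abs.mpr (Or.inr (by nlinarith [hu.2])))

theorem distMidpoints_eq_of_mem_Icc {n : ℕ} {h u : ℝ} {i : ℕ} (hi : i < n)
    (hu : u ∈ Icc (2 * i * h) (2 * (i + 1) * h)) :
    distMidpoints n h u = |u - (2 * i + 1) * h| := by
  have : Nonempty (Fin n) := ⟨⟨i, hi⟩⟩
  unfold distMidpoints
  refine le_antisymm (ciInf_le (Finite.bddBelow_range _) (⟨i, hi⟩ : Fin n)) (le_ciInf fun j => ?_)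
  have hu' : u ∈ Icc (2 * ((i : ℤ) : ℝ) * h) (2 * (((i : ℤ) : ℝ) + 1) * h) := by
    simpa only [Int.cast_natCast] using hu
  simpa only [Int.cast_natCast] using abs_sub_odd_mul_le_of_mem_Icc hu' (j : ℕ)

theorem eqOn_log_inv_distMidpoints {n : ℕ} {h : ℝ} {i : ℕ} (hi : i < n) :
    EqOn (fun u => log (1 / distMidpoints n h u)) (fun u => -log (u - (2 * i + 1) * h))
      (Icc (2 * i * h) (2 * (i + 1) * h)) := by
  intro u hu
  simp only [distMidpoints_eq_of_mem_Icc hi hu, one_div, log_inv, log_abs]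

theorem intervalIntegrable_log_inv_distMidpoints {n : ℕ} {h : ℝ} (hh : 0 ≤ h) {i : ℕ}
    (hi : i < n) :
    IntervalIntegrable (fun u => log (1 / distMidpoints n h u)) volume
      (2 * i * h) (2 * (i + 1) * h) := by
  have hle : 2 * i * h ≤ 2 * (i + 1) * h := by nlinarith
  have shifted := (intervalIntegrable_log' (a := 2 * i * h - (2 * i + 1) * h)
    (b := 2 * (i + 1) * h - (2 * i + 1) * h)).comp_sub_right ((2 * i + 1) * h)
  simp only [sub_add_cancel] at shifted
  refine shifted.neg.congr fun u hu => ?_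
  rw [uIoc_of_le hle] at hu
  exact (eqOn_log_inv_distMidpoints hi (Ioc_subset_Icc_self hu)).symm

theorem integral_log_inv_distMidpoints_cell {n : ℕ} {h : ℝ} (hh : 0 ≤ h) {i : ℕ} (hi : i < n) :
    ∫ u in (2 * i * h)..(2 * (i + 1) * h), log (1 / distMidpoints n h u) =
      2 * (h - h * log h) := by
  have hle : 2 * i * h ≤ 2 * (i + 1) * h := by nlinarith
  rw [integral_congr ((eqOn_log_inv_distMidpoints hi).mono (uIcc_of_le hle).subset),
    intervalIntegral.integral_neg,
    show 2 * i * h = (2 * i + 1) * h - h by ring, show 2 * (i + 1) * h = (2 * i + 1) * h + h by ring,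
    integral_log_sub_symm]
  ring

theorem integral_log_inv_distMidpoints {n : ℕ} {h : ℝ} (hh : 0 ≤ h) :
    ∫ u in (0 : ℝ)..(2 * n * h), log (1 / distMidpoints n h u) = 2 * n * (h - h * log h) := by
  have cells := sum_integral_adjacent_intervals (a := fun k : ℕ => 2 * (k : ℝ) * h)
    (f := fun u => log (1 / distMidpoints n h u)) (μ := volume) fun k hk => by
      simpa using intervalIntegrable_log_inv_distMidpoints hh hk
  simp only [Nat.cast_zero, mul_zero, zero_mul, Nat.cast_add, Nat.cast_one] at cells
  rw [← cells, Finset.sum_congr rfl fun k hk =>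
    integral_log_inv_distMidpoints_cell hh (Finset.mem_range.mp hk)]
  simp only [Finset.sum_const, Finset.card_range, nsmul_eq_mul]
  ring

theorem one_dim_midpoint_codebook (M : ℝ) (hM : 0 < M) (n : ℕ) (hn : 1 ≤ n) :
    (∫ u in Set.Icc (0 : ℝ) M,
        Real.log (1 / ⨅ i : Fin n, |u - (2 * (i : ℝ) + 1) * M / (2 * n)|) / M) =
      Real.log (n / M) + 1 + Real.log 2 := by
  have hn0 : (0 : ℝ) < n := by exact_mod_cast hn
  set h := M / (2 * n) with h_def
  have hM_eq : 2 * n * h = M := by rw [h_def]; field_simp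
  have integrand (u : ℝ) : log (1 / ⨅ i : Fin n, |u - (2 * (i : ℝ) + 1) * M / (2 * n)|) =
      log (1 / distMidpoints n h u) := by
    simp only [distMidpoints, h_def, mul_div_assoc]
  have total := integral_log_inv_distMidpoints (n := n) (h := h) (by positivity)
  rw [hM_eq, show 2 * n * (h - h * log h) = M * (1 - log h) by rw [← hM_eq]; ring] at total
  simp_rw [integrand]
  rw [MeasureTheory.integral_div, integral_Icc_eq_integral_Ioc, ← integral_of_le hM.le, total,
    mul_div_cancel_left₀ _ hM.ne', h_def, log_div hM.ne' (by positivity),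
    log_div (by positivity) hM.ne', log_mul two_ne_zero hn0.ne']
  ring
end

section
/- The normalized logarithmic moment of the unit square in ℝ^2 equals (6 + 2·log 2 − π)/4; that is, ∫_{[−1/2,1/2]^2} log(1/‖u‖) du = (6 + 2·log 2 − π)/4. -/
/-!
In Cartesian coordinates the integrand is `-(1/2) log (x² + y²)`. For `x ≠ 0` the function
`y ↦ y log (x² + y²) - 2y + 2x arctan (y / x)` is an antiderivative of `log (x² + y²)`, and the
identity `x arctan (1/x) = (π/2)|x| - x arctan x` turns the resulting inner integral into a
continuous function of `x` with an elementary antiderivative on each piece. Over the square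
`[-c, c]²` this gives `4c² (log (2c²) - 3 + π/2)`.
-/

open MeasureTheory Real Set intervalIntegral

lemma mul_arctan_inv (x : ℝ) : x * arctan x⁻¹ = π / 2 * |x| - x * arctan x := by
  rcases lt_trichotomy x 0 with hx | rfl | hx
  · rw [arctan_inv_of_neg hx, abs_of_neg hx]; ring
  · simp
  · rw [arctan_inv_of_pos hx, abs_of_pos hx]; ring

lemma hasDerivAt_antideriv_log_sq_add_sq {x : ℝ} (hx : x ≠ 0) (y : ℝ) :
    HasDerivAt (fun y => y * log (x ^ 2 + y ^ 2) - 2 * y + 2 * x * arctan (y / x))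
      (log (x ^ 2 + y ^ 2)) y := by
  have hlog : HasDerivAt (fun y => log (x ^ 2 + y ^ 2)) (2 * y / (x ^ 2 + y ^ 2)) y := by
    simpa using ((hasDerivAt_pow 2 y).const_add (x ^ 2)).log (by positivity)
  refine ((((hasDerivAt_id' y).mul hlog).sub ((hasDerivAt_id' y).const_mul 2)).add
    (((hasDerivAt_id' y).div_const x).arctan.const_mul (2 * x))).congr_deriv ?_
  field_simp
  ring

theorem integral_log_sq_add_sq {x : ℝ} (hx : x ≠ 0) {c : ℝ} (hc : 0 < c) :
    ∫ y in -c..c, log (x ^ 2 + y ^ 2) =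
      2 * c * log (x ^ 2 + c ^ 2) - 4 * c + 2 * π * |x| - 4 * x * arctan (x / c) := by
  have hint : IntervalIntegrable (fun y => log (x ^ 2 + y ^ 2)) volume (-c) c :=
    ((continuous_const.add (continuous_pow 2)).log
      fun y => (by positivity : 0 < x ^ 2 + y ^ 2).ne').intervalIntegrable _ _
  rw [integral_eq_sub_of_hasDerivAt (fun y _ => hasDerivAt_antideriv_log_sq_add_sq hx y) hint]
  have hswap : x * arctan (c / x) = π / 2 * |x| - x * arctan (x / c) := by
    have h := mul_arctan_inv (x / c)
    rw [inv_div, abs_div, abs_of_pos hc] at h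
    field_simp at h ⊢
    linarith
  simp only [neg_div, arctan_neg, neg_sq]
  linear_combination 4 * hswap

lemma integral_log_sq_add_sq_self {c : ℝ} (hc : 0 < c) :
    ∫ x in -c..c, log (x ^ 2 + c ^ 2) = 2 * c * log (2 * c ^ 2) - 4 * c + π * c := by
  simp_rw [add_comm _ (c ^ 2)]
  rw [integral_log_sq_add_sq hc.ne' hc, div_self hc.ne', arctan_one, abs_of_pos hc]
  ring_nf

lemma integral_abs_symmetric {c : ℝ} (hc : 0 ≤ c) : ∫ x in -c..c, |x| = c ^ 2 := by
  have hpos : ∫ x in (0)..c, |x| = c ^ 2 / 2 := by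
    rw [integral_congr (g := fun x => x) fun x hx => abs_of_nonneg ?_]
    · simp [integral_id]
    · rw [uIcc_of_le hc] at hx
      exact hx.1
  have hneg : ∫ x in -c..0, |x| = ∫ x in (0)..c, |x| := by
    simpa using (integral_comp_neg (a := 0) (b := c) (fun x => |x|)).symm
  rw [← integral_add_adjacent_intervals (b := 0) (continuous_abs.intervalIntegrable _ _)
    (continuous_abs.intervalIntegrable _ _), hneg, hpos]
  ring

lemma integral_mul_arctan_div {c : ℝ} (hc : 0 < c) :
    ∫ x in -c..c, x * arctan (x / c) = c ^ 2 * (π / 2 - 1) := by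
  have hderiv : ∀ x, HasDerivAt (fun x => (x ^ 2 + c ^ 2) / 2 * arctan (x / c) - c * x / 2)
      (x * arctan (x / c)) x := by
    intro x
    refine ((((hasDerivAt_pow 2 x).add_const (c ^ 2)).div_const 2).mul
      ((hasDerivAt_id' x).div_const c).arctan).sub
      (((hasDerivAt_id' x).const_mul c).div_const 2) |>.congr_deriv ?_
    field_simp
    ring
  rw [integral_eq_sub_of_hasDerivAt (fun x _ => hderiv x)
    ((by fun_prop : Continuous fun x => x * arctan (x / c)).intervalIntegrable _ _)]
  simp [div_self hc.ne', arctan_one, neg_div]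
  ring

lemma abs_log_sq_add_sq_le {x : ℝ} (hx : x ≠ 0) (y : ℝ) :
    |log (x ^ 2 + y ^ 2)| ≤ 2 * |log x| + (x ^ 2 + y ^ 2) := by
  have hpos : 0 < x ^ 2 + y ^ 2 := by positivity
  have hlow : 2 * log x ≤ log (x ^ 2 + y ^ 2) :=
    calc 2 * log x = log (x ^ 2) := by rw [log_pow]; norm_num
      _ ≤ log (x ^ 2 + y ^ 2) := log_le_log (by positivity) (by nlinarith)
  have hup : log (x ^ 2 + y ^ 2) ≤ x ^ 2 + y ^ 2 :=
    (log_le_sub_one_of_pos hpos).trans (by linarith)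
  rw [abs_le]
  constructor <;> linarith [neg_abs_le (log x), le_abs_self (log x)]

lemma integrableOn_log_sq_add_sq_Icc_prod (a b c d : ℝ) :
    IntegrableOn (fun p : ℝ × ℝ => log (p.1 ^ 2 + p.2 ^ 2)) (Icc a b ×ˢ Icc c d) := by
  have hlog : IntegrableOn (fun p : ℝ × ℝ => 2 * |log p.1|) (Icc a b ×ˢ Icc c d) := by
    have h : IntegrableOn log (Icc a b) :=
      ((intervalIntegrable_iff' enorm_ne_top).1 intervalIntegrable_log').mono_set Icc_subset_uIcc
    rw [IntegrableOn, Measure.volume_eq_prod, ← Measure.prod_restrict]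
    exact (h.norm.const_mul 2).comp_fst _
  have hsq : IntegrableOn (fun p : ℝ × ℝ => p.1 ^ 2 + p.2 ^ 2) (Icc a b ×ˢ Icc c d) :=
    (by fun_prop : Continuous fun p : ℝ × ℝ => p.1 ^ 2 + p.2 ^ 2).continuousOn.integrableOn_compact
      (isCompact_Icc.prod isCompact_Icc)
  refine (hlog.add hsq).mono' (Measurable.aestronglyMeasurable (by fun_prop)) (ae_restrict_of_ae ?_)
  rw [Measure.volume_eq_prod]
  filter_upwards
    [Measure.quasiMeasurePreserving_fst.ae ((countable_singleton (0 : ℝ)).ae_notMem volume)]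
    with p hp
  exact abs_log_sq_add_sq_le hp _

theorem setIntegral_log_sq_add_sq_square {c : ℝ} (hc : 0 < c) :
    ∫ p in Icc (-c) c ×ˢ Icc (-c) c, log (p.1 ^ 2 + p.2 ^ 2) =
      4 * c ^ 2 * (log (2 * c ^ 2) - 3 + π / 2) := by
  have hIcc : ∀ f : ℝ → ℝ, ∫ x in Icc (-c) c, f x = ∫ x in -c..c, f x := fun f => by
    rw [integral_Icc_eq_integral_Ioc, integral_of_le (by linarith)]
  have hinner : ∀ᵐ x, x ∈ Icc (-c) c → ∫ y in Icc (-c) c, log (x ^ 2 + y ^ 2) =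
      2 * c * log (x ^ 2 + c ^ 2) - 4 * c + 2 * π * |x| - 4 * (x * arctan (x / c)) := by
    filter_upwards [(countable_singleton (0 : ℝ)).ae_notMem volume] with x hx _
    rw [hIcc, integral_log_sq_add_sq hx hc, mul_assoc 4]
  have hcont : Continuous fun x => log (x ^ 2 + c ^ 2) :=
    (by fun_prop : Continuous fun x : ℝ => x ^ 2 + c ^ 2).log
      fun x => (by positivity : 0 < x ^ 2 + c ^ 2).ne'
  rw [Measure.volume_eq_prod, setIntegral_prod _ (integrableOn_log_sq_add_sq_Icc_prod _ _ _ _),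
    setIntegral_congr_ae measurableSet_Icc hinner, hIcc, intervalIntegral.integral_sub,
    intervalIntegral.integral_add, intervalIntegral.integral_sub]
  · simp only [intervalIntegral.integral_const_mul, intervalIntegral.integral_const, smul_eq_mul,
      integral_log_sq_add_sq_self hc, integral_abs_symmetric hc.le, integral_mul_arctan_div hc]
    ring
  all_goals exact Continuous.intervalIntegrable (by fun_prop) _ _

lemma EuclideanSpace.setIntegral_fin_two {E : Type*} [NormedAddCommGroup E] [NormedSpace ℝ E]
    (f : EuclideanSpace ℝ (Fin 2) → E) (s : Set (EuclideanSpace ℝ (Fin 2))) :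
    ∫ u in s, f u = ∫ p in (fun p : ℝ × ℝ => !₂[p.1, p.2]) ⁻¹' s, f !₂[p.1, p.2] :=
  ((EuclideanSpace.volume_preserving_symm_measurableEquiv_toLp (Fin 2)).symm.comp
    (volume_preserving_finTwoArrow ℝ).symm).setIntegral_preimage_emb
    ((MeasurableEquiv.measurableEmbedding _).comp (MeasurableEquiv.measurableEmbedding _)) f s
    |>.symm

lemma EuclideanSpace.norm_fin_two (x y : ℝ) : ‖!₂[x, y]‖ = √(x ^ 2 + y ^ 2) := by
  simp [EuclideanSpace.norm_eq, Fin.sum_univ_two]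

theorem square_log_moment :
    (∫ u in {u : EuclideanSpace ℝ (Fin 2) | ∀ i, u i ∈ Set.Icc (-(1/2) : ℝ) (1/2)},
        Real.log (1 / ‖u‖)) = (6 + 2 * Real.log 2 - Real.pi) / 4 := by
  have hsquare : (fun p : ℝ × ℝ => !₂[p.1, p.2]) ⁻¹'
      {u : EuclideanSpace ℝ (Fin 2) | ∀ i, u i ∈ Icc (-(1/2) : ℝ) (1/2)} =
      Icc (-(1/2)) (1/2) ×ˢ Icc (-(1/2)) (1/2) := by
    ext p
    simp [Fin.forall_fin_two, -Icc_prod_Icc]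
  have hlog : ∀ p : ℝ × ℝ, log (1 / ‖!₂[p.1, p.2]‖) = -(1 / 2) * log (p.1 ^ 2 + p.2 ^ 2) := by
    intro p
    rw [EuclideanSpace.norm_fin_two, one_div, log_inv, log_sqrt (by positivity)]
    ring
  rw [EuclideanSpace.setIntegral_fin_two, hsquare]
  simp_rw [hlog]
  rw [MeasureTheory.integral_const_mul,
    setIntegral_log_sq_add_sq_square (by norm_num : (0 : ℝ) < 1 / 2),
    show (2 : ℝ) * (1 / 2) ^ 2 = 2⁻¹ by norm_num, log_inv]
  ring
end
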